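/- arXiv:2408.07775 — 3 statements merged into one kernel-verified Lean document; each statement's English description precedes it below -/
import Mathlib

section
/- Let n, ν ∈ ℕ, s ∈ (0, n/2), and let {z_{i,m}}_{m∈ℕ} ⊂ ℝⁿ and {λ_{i,m}}_{m∈ℕ} ⊂ (0,∞) for i = 1,…,ν satisfy: (a) λ_{1,m} ≤ λ_{2,m} ≤ … ≤ λ_{ν,m} for all m; (b) the ν-tuples of bubbles (U[z_{1,m},λ_{1,m}],…,U[z_{ν,m},λ_{ν,m}]) are δ'_m-interacting with δ'_m → 0 as m → ∞; (c) for each pair i < j, the sequence z_{ij,m} := λ_{i,m}(z_{j,m} − z_{i,m}) either converges to some point of ℝⁿ or satisfies |z_{ij,m}| → ∞. Define the relation i ≺ j on {1,…,ν} by: i ≺ j iff i < j and lim_{m→∞} z_{ij,m} exists in ℝⁿ. Then ≺ is a strict partial order, and for every j ∈ {1,…,ν} the set {i : i ⪯ j} is totally ordered by the corresponding non-strict order ⪯ (so ({1,…,ν}, ⪯) is a rooted forest). -/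
open MeasureTheory Real Filter
open scoped FourierTransform ENNReal Topology

noncomputable section

abbrev Euc (n : ℕ) := EuclideanSpace ℝ (Fin n)

/-- Fourier transform of a real-valued function on `ℝⁿ`. -/
def ft (n : ℕ) (u : Euc n → ℝ) : Euc n → ℂ :=
  VectorFourier.fourierIntegral Real.fourierChar volume (innerₗ (Euc n)) (fun x => (u x : ℂ))

/-- Square of the homogeneous Sobolev norm `‖u‖_{Ḣ^s}²`. -/
def hsNormSq (n : ℕ) (s : ℝ) (u : Euc n → ℝ) : ℝ :=
  ∫ ξ : Euc n, ‖ξ‖ ^ (2*s) * ‖ft n u ξ‖ ^ 2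

/-- The homogeneous Sobolev norm `‖u‖_{Ḣ^s}`. -/
def hsNorm (n : ℕ) (s : ℝ) (u : Euc n → ℝ) : ℝ :=
  Real.sqrt (hsNormSq n s u)

/-- Membership in the homogeneous Sobolev space `Ḣ^s(ℝⁿ)`. -/
def memHs (n : ℕ) (s : ℝ) (u : Euc n → ℝ) : Prop :=
  Integrable (fun ξ : Euc n => ‖ξ‖ ^ (2*s) * ‖ft n u ξ‖ ^ 2)

/-- The `Ḣ^s` inner product. -/
def hsInner (n : ℕ) (s : ℝ) (f g : Euc n → ℝ) : ℂ :=
  ∫ ξ : Euc n, ((‖ξ‖ ^ (2*s) : ℝ) : ℂ) * (ft n f ξ * (starRingEnd ℂ) (ft n g ξ))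

/-- `fracEq n s f g` encodes the equation `(-Δ)^s f = g` via the Fourier transform
`𝓕((-Δ)^s f)(ξ) = ‖ξ‖^{2s} 𝓕f(ξ)`. -/
def fracEq (n : ℕ) (s : ℝ) (f g : Euc n → ℝ) : Prop :=
  ∀ ξ : Euc n, ((‖ξ‖ ^ (2*s) : ℝ) : ℂ) * ft n f ξ = ft n g ξ

/-- The critical exponent `p = (n+2s)/(n-2s)`. -/
def pexp (n : ℕ) (s : ℝ) : ℝ := ((n:ℝ) + 2*s) / ((n:ℝ) - 2*s)

/-- The normalizing constant `α_{n,s}`. -/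
def bubbleConst (n : ℕ) (s : ℝ) : ℝ :=
  2 ^ (((n:ℝ) - 2*s)/2) *
    (Real.Gamma (((n:ℝ) + 2*s)/2) / Real.Gamma (((n:ℝ) - 2*s)/2)) ^ (((n:ℝ) - 2*s)/(4*s))

/-- The bubble `U[z,λ]`. -/
def bubble (n : ℕ) (s : ℝ) (z : Euc n) (lam : ℝ) (x : Euc n) : ℝ :=
  bubbleConst n s * (lam / (1 + lam ^ 2 * ‖x - z‖ ^ 2)) ^ (((n:ℝ) - 2*s)/2)

/-- The functions `Z^a[z,λ]`, `a = 1,…,n+1`: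
for `a ≤ n`, `Z^a = λ⁻¹ ∂U[z,λ]/∂z_a`, and `Z^{n+1} = λ ∂U[z,λ]/∂λ`. -/
def bubbleZ (n : ℕ) (s : ℝ) (z : Euc n) (lam : ℝ) (a : Fin (n+1)) (x : Euc n) : ℝ :=
  if h : (a : ℕ) < n then
    lam⁻¹ *
      deriv (fun t : ℝ => bubble n s (z + t • EuclideanSpace.single (⟨(a : ℕ), h⟩ : Fin n) 1) lam x) 0
  else
    lam * deriv (fun t : ℝ => bubble n s z t x) lam

/-- The interaction quantity `q_{ij}`. -/
def interq (n : ℕ) (s : ℝ) (z₁ z₂ : Euc n) (l₁ l₂ : ℝ) : ℝ :=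
  (l₁/l₂ + l₂/l₁ + l₁*l₂*‖z₁ - z₂‖ ^ 2) ^ (-(((n:ℝ) - 2*s)/2))

/-- A ν-tuple of bubbles is δ-interacting. -/
def deltaInteracting (n : ℕ) (s : ℝ) (ν : ℕ) (z : Fin ν → Euc n) (lam : Fin ν → ℝ) (δ : ℝ) : Prop :=
  ∀ i j : Fin ν, i ≠ j → interq n s (z i) (z j) (lam i) (lam j) ≤ δ

/-- `𝒬 = max_{i≠j} q_{ij}`. -/
def scrQ (n : ℕ) (s : ℝ) (ν : ℕ) (z : Fin ν → Euc n) (lam : Fin ν → ℝ) : ℝ :=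
  sSup {q : ℝ | ∃ i j : Fin ν, i ≠ j ∧ q = interq n s (z i) (z j) (lam i) (lam j)}

/-- `ℛ_{ij} = max{√(λ_i/λ_j), √(λ_j/λ_i), √(λ_iλ_j)|z_i−z_j|}`. -/
def interR {n : ℕ} (z₁ z₂ : Euc n) (l₁ l₂ : ℝ) : ℝ :=
  max (max (Real.sqrt (l₁/l₂)) (Real.sqrt (l₂/l₁))) (Real.sqrt (l₁*l₂) * ‖z₁ - z₂‖)

/-- `ℛ = (1/2) min_{i≠j} ℛ_{ij}`. -/
def scrR (n : ℕ) (ν : ℕ) (z : Fin ν → Euc n) (lam : Fin ν → ℝ) : ℝ :=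
  (1/2) * sInf {r : ℝ | ∃ i j : Fin ν, i ≠ j ∧ r = interR (z i) (z j) (lam i) (lam j)}

/-- Japanese bracket, as a function of `|y|`. -/
def jb (t : ℝ) : ℝ := Real.sqrt (1 + t ^ 2)

/-- The weight `v_i^{in}` (both the `n > 6s` and the `n = 6s` versions). -/
def vin (n : ℕ) (s R : ℝ) (z : Euc n) (lam : ℝ) (x : Euc n) : ℝ :=
  if (n:ℝ) = 6*s then
    (if lam * ‖x - z‖ < R ^ 2 then
      lam ^ (4*s) * R ^ (-(4*s)) * jb (lam * ‖x - z‖) ^ (-(4*s)) else 0)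
  else
    (if lam * ‖x - z‖ < R then
      lam ^ (((n:ℝ) + 2*s)/2) * R ^ (2*s - (n:ℝ)) * jb (lam * ‖x - z‖) ^ (-(4*s)) else 0)

/-- The weight `v_i^{out}`. -/
def vout (n : ℕ) (s R : ℝ) (z : Euc n) (lam : ℝ) (x : Euc n) : ℝ :=
  if (n:ℝ) = 6*s then
    (if R ^ 2 ≤ lam * ‖x - z‖ then
      lam ^ (4*s) * R ^ (-(2*s)) * (lam * ‖x - z‖) ^ (-(5*s)) else 0)
  else
    (if R ≤ lam * ‖x - z‖ then
      lam ^ (((n:ℝ) + 2*s)/2) * R ^ (-(4*s)) * (lam * ‖x - z‖) ^ (2*s - (n:ℝ)) else 0)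

/-- The weight `w_i^{in}`. -/
def win (n : ℕ) (s R : ℝ) (z : Euc n) (lam : ℝ) (x : Euc n) : ℝ :=
  if (n:ℝ) = 6*s then
    (if lam * ‖x - z‖ < R ^ 2 then
      lam ^ (2*s) * R ^ (-(4*s)) * jb (lam * ‖x - z‖) ^ (-(2*s)) else 0)
  else
    (if lam * ‖x - z‖ < R then
      lam ^ (((n:ℝ) - 2*s)/2) * R ^ (2*s - (n:ℝ)) * jb (lam * ‖x - z‖) ^ (-(2*s)) else 0)

/-- The weight `w_i^{out}`. -/
def wout (n : ℕ) (s R : ℝ) (z : Euc n) (lam : ℝ) (x : Euc n) : ℝ :=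
  if (n:ℝ) = 6*s then
    (if R ^ 2 ≤ lam * ‖x - z‖ then
      lam ^ (2*s) * R ^ (-(2*s)) * (lam * ‖x - z‖) ^ (-(3*s)) else 0)
  else
    (if R ≤ lam * ‖x - z‖ then
      lam ^ (((n:ℝ) - 2*s)/2) * R ^ (-(4*s)) * (lam * ‖x - z‖) ^ (4*s - (n:ℝ)) else 0)

/-- `𝒱 = Σ_i (v_i^{in} + v_i^{out})`. -/
def mcV (n : ℕ) (s : ℝ) (ν : ℕ) (z : Fin ν → Euc n) (lam : Fin ν → ℝ) (x : Euc n) : ℝ :=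
  ∑ i, (vin n s (scrR n ν z lam) (z i) (lam i) x + vout n s (scrR n ν z lam) (z i) (lam i) x)

/-- `𝒲 = Σ_i (w_i^{in} + w_i^{out})`. -/
def mcW (n : ℕ) (s : ℝ) (ν : ℕ) (z : Fin ν → Euc n) (lam : Fin ν → ℝ) (x : Euc n) : ℝ :=
  ∑ i, (win n s (scrR n ν z lam) (z i) (lam i) x + wout n s (scrR n ν z lam) (z i) (lam i) x)

/-- Weighted `L∞` norm `sup_x |f(x)|/W(x)`, valued in `ℝ≥0∞`. -/
def wnorm (n : ℕ) (f W : Euc n → ℝ) : ℝ≥0∞ :=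
  ⨆ x : Euc n, ENNReal.ofReal (|f x| / W x)

/-- `σ = Σ_i U[z_i, λ_i]`. -/
def sigmaB (n : ℕ) (s : ℝ) (ν : ℕ) (z : Fin ν → Euc n) (lam : Fin ν → ℝ) (x : Euc n) : ℝ :=
  ∑ i, bubble n s (z i) (lam i) x

/-- `Σ_{i,a} c_i^a U_i^{p-1} Z_i^a`. -/
def interTerm (n : ℕ) (s : ℝ) (ν : ℕ) (z : Fin ν → Euc n) (lam : Fin ν → ℝ)
    (c : Fin ν → Fin (n+1) → ℝ) (x : Euc n) : ℝ :=
  ∑ i, ∑ a, c i a * (bubble n s (z i) (lam i) x) ^ (pexp n s - 1) * bubbleZ n s (z i) (lam i) a x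

/-- Orthogonality conditions `∫ f U_i^{p-1} Z_i^a = 0` for all `i, a`. -/
def orthZ (n : ℕ) (s : ℝ) (ν : ℕ) (z : Fin ν → Euc n) (lam : Fin ν → ℝ) (f : Euc n → ℝ) : Prop :=
  ∀ (i : Fin ν) (a : Fin (n+1)),
    ∫ x : Euc n, f x * (bubble n s (z i) (lam i) x) ^ (pexp n s - 1) *
      bubbleZ n s (z i) (lam i) a x = 0

/-- `Γ(u) = ‖(-Δ)^s u - |u|^{p-1}u‖_{Ḣ^{-s}}`, computed on the Fourier side. -/
def gammaU (n : ℕ) (s : ℝ) (u : Euc n → ℝ) : ℝ :=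
  Real.sqrt (∫ ξ : Euc n, ‖ξ‖ ^ (-(2*s)) *
    ‖((‖ξ‖ ^ (2*s) : ℝ) : ℂ) * ft n u ξ -
      ft n (fun x => |u x| ^ (pexp n s - 1) * u x) ξ‖ ^ 2)

/-- The Riesz potential `Φ_{n,s}(x) = γ_{n,s}|x|^{2s-n}`. -/
def rieszK (n : ℕ) (s : ℝ) (x : Euc n) : ℝ :=
  (Real.Gamma (((n:ℝ) - 2*s)/2) / (Real.pi ^ ((n:ℝ)/2) * 2 ^ (2*s) * Real.Gamma s)) *
    ‖x‖ ^ (2*s - (n:ℝ))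

/-- The relation `i ≺ j` on bubble indices: `i < j` and `z_{ij,m} = λ_{i,m}(z_{j,m}-z_{i,m})`
converges in `ℝⁿ`. -/
def precRel (n ν : ℕ) (z : Fin ν → ℕ → Euc n) (lam : Fin ν → ℕ → ℝ) (i j : Fin ν) : Prop :=
  i < j ∧ ∃ w : Euc n,
    Filter.Tendsto (fun m => lam i m • (z j m - z i m)) Filter.atTop (nhds w)

/-! The rescaled differences `z_{ij,m} = λ_{i,m}(z_{j,m} - z_{i,m})` satisfy
`z_{ik} = z_{ij} + (λ_i/λ_j) z_{jk}` with `λ_i/λ_j ≤ 1` for `i ≤ j`, so boundedness of two of them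
bounds the third, and the dichotomy (c) upgrades boundedness to convergence. This gives both the
transitivity of `≺` and the comparability of any two predecessors of a common index. -/

section RescaledDifference

variable {α E : Type*} [NormedAddCommGroup E]

lemma exists_tendsto_of_isBoundedUnder {l : Filter α} [l.NeBot] {f : α → E}
    (hf : (∃ w, Tendsto f l (𝓝 w)) ∨ Tendsto (fun m => ‖f m‖) l atTop)
    (hb : IsBoundedUnder (· ≤ ·) l fun m => ‖f m‖) : ∃ w, Tendsto f l (𝓝 w) :=
  hf.resolve_right fun h => not_isBoundedUnder_of_tendsto_atTop h hb

variable [NormedSpace ℝ E]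

lemma norm_smul_sub_le_add {a b : ℝ} (hab : |a| ≤ |b|) (x y w : E) :
    ‖a • (w - x)‖ ≤ ‖a • (y - x)‖ + ‖b • (w - y)‖ :=
  calc ‖a • (w - x)‖ = ‖a • (y - x) + a • (w - y)‖ := by
        rw [← smul_add, sub_add_sub_cancel']
    _ ≤ ‖a • (y - x)‖ + ‖a • (w - y)‖ := norm_add_le _ _
    _ ≤ ‖a • (y - x)‖ + ‖b • (w - y)‖ := by
        simp only [norm_smul, Real.norm_eq_abs]
        gcongr

lemma isBoundedUnder_norm_smul_sub {l : Filter α} {a b : α → ℝ} {x y w : α → E}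
    (hab : ∀ m, |a m| ≤ |b m|)
    (hxy : IsBoundedUnder (· ≤ ·) l fun m => ‖a m • (y m - x m)‖)
    (hyw : IsBoundedUnder (· ≤ ·) l fun m => ‖b m • (w m - y m)‖) :
    IsBoundedUnder (· ≤ ·) l fun m => ‖a m • (w m - x m)‖ :=
  (isBoundedUnder_le_add hxy hyw).mono_le
    (Eventually.of_forall fun m => norm_smul_sub_le_add (hab m) (x m) (y m) (w m))

end RescaledDifference

theorem stmt9_general (n ν : ℕ)
    (z : Fin ν → ℕ → Euc n) (lam : Fin ν → ℕ → ℝ)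
    (hpos : ∀ i m, 0 < lam i m)
    (hmono : ∀ (m : ℕ) (i j : Fin ν), i ≤ j → lam i m ≤ lam j m)
    (hdich : ∀ i j : Fin ν, i < j →
      (∃ w : Euc n,
        Filter.Tendsto (fun m => lam i m • (z j m - z i m)) Filter.atTop (nhds w)) ∨
      Filter.Tendsto (fun m => ‖lam i m • (z j m - z i m)‖) Filter.atTop Filter.atTop) :
    (∀ i : Fin ν, ¬ precRel n ν z lam i i) ∧
    (∀ i j k : Fin ν, precRel n ν z lam i j → precRel n ν z lam j k → precRel n ν z lam i k) ∧
    (∀ j i₁ i₂ : Fin ν,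
      (precRel n ν z lam i₁ j ∨ i₁ = j) → (precRel n ν z lam i₂ j ∨ i₂ = j) →
      precRel n ν z lam i₁ i₂ ∨ i₁ = i₂ ∨ precRel n ν z lam i₂ i₁) := by
  have habs {i j : Fin ν} (hij : i ≤ j) (m : ℕ) : |lam i m| ≤ |lam j m| :=
    abs_le_abs_of_nonneg (hpos i m).le (hmono m i j hij)
  have hbdd {i j : Fin ν} (h : precRel n ν z lam i j ∨ i = j) :
      IsBoundedUnder (· ≤ ·) atTop fun m => ‖lam i m • (z j m - z i m)‖ := by
    rcases h with ⟨-, w, hw⟩ | rfl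
    · exact hw.norm.isBoundedUnder_le
    · simpa only [sub_self, smul_zero, norm_zero] using isBoundedUnder_const
  have hprec {i j : Fin ν} (hij : i < j)
      (hb : IsBoundedUnder (· ≤ ·) atTop fun m => ‖lam i m • (z j m - z i m)‖) :
      precRel n ν z lam i j :=
    ⟨hij, exists_tendsto_of_isBoundedUnder (hdich i j hij) hb⟩
  have hcomparable {i₁ i₂ j : Fin ν} (h12 : i₁ < i₂) (h₁ : precRel n ν z lam i₁ j ∨ i₁ = j)
      (h₂ : precRel n ν z lam i₂ j ∨ i₂ = j) : precRel n ν z lam i₁ i₂ := by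
    refine hprec h12 (isBoundedUnder_norm_smul_sub (habs h12.le) (hbdd h₁) ?_)
    simpa only [norm_smul, norm_sub_rev] using hbdd h₂
  refine ⟨fun i h => lt_irrefl i h.1, fun i j k hij hjk => ?_, fun j i₁ i₂ h₁ h₂ => ?_⟩
  · exact hprec (hij.1.trans hjk.1)
      (isBoundedUnder_norm_smul_sub (habs hij.1.le) (hbdd (.inl hij)) (hbdd (.inl hjk)))
  · rcases lt_trichotomy i₁ i₂ with h | h | h
    · exact .inl (hcomparable h h₁ h₂)
    · exact .inr (.inl h)
    · exact .inr (.inr (hcomparable h h₂ h₁))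

/-- Lemma 4.4: the tree structure of δ-interacting bubbles:
`≺` is a strict partial order and the set of predecessors of any index is totally
ordered, so the index set is a rooted forest. -/
theorem stmt9 (n ν : ℕ) (s : ℝ) (hs : 0 < s) (hsn : 2*s < (n:ℝ))
    (z : Fin ν → ℕ → Euc n) (lam : Fin ν → ℕ → ℝ)
    (hpos : ∀ i m, 0 < lam i m)
    (hmono : ∀ (m : ℕ) (i j : Fin ν), i ≤ j → lam i m ≤ lam j m)
    (δ' : ℕ → ℝ)
    (hδ : Filter.Tendsto δ' Filter.atTop (nhds 0))
    (hinter : ∀ m, deltaInteracting n s ν (fun i => z i m) (fun i => lam i m) (δ' m))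
    (hdich : ∀ i j : Fin ν, i < j →
      (∃ w : Euc n,
        Filter.Tendsto (fun m => lam i m • (z j m - z i m)) Filter.atTop (nhds w)) ∨
      Filter.Tendsto (fun m => ‖lam i m • (z j m - z i m)‖) Filter.atTop Filter.atTop) :
    (∀ i : Fin ν, ¬ precRel n ν z lam i i) ∧
    (∀ i j k : Fin ν, precRel n ν z lam i j → precRel n ν z lam j k → precRel n ν z lam i k) ∧
    (∀ j i₁ i₂ : Fin ν,
      (precRel n ν z lam i₁ j ∨ i₁ = j) → (precRel n ν z lam i₂ j ∨ i₂ = j) →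
      precRel n ν z lam i₁ i₂ ∨ i₁ = i₂ ∨ precRel n ν z lam i₂ i₁) :=
  stmt9_general n ν z lam hpos hmono hdich

end
end

section
/- Let n > 6s, ν ≥ 2, and let {U_i = U[z_i,λ_i]}_{i=1}^ν be a δ-interacting family of bubbles. There exist δ₀ > 0 and C > 0 depending only on n, s, ν such that if δ ≤ δ₀, then for all i ≠ j with λ_i ≤ λ_j and all x ∈ ℝⁿ: (i) U_j^{p−1} w_i^in ≤ C(ℛ_{ij}^{−2s} v_j^in + ℛ^{−2s} v_j^out + ℛ^{−2s} v_i^in); (ii) U_j^{p−1} w_i^out ≤ C(ℛ_{ij}^{−2s} v_j^in + ℛ^{−2s} v_j^out + ℛ^{−2s} v_i^out); (iii) U_i^{p−1} w_j^in ≤ C ℛ_{ij}^{−2s} v_j^in; (iv) U_i^{p−1} w_j^out ≤ C ⟨z_{ij}⟩^{−2s} (v_i^in + v_i^out + v_j^out), where z_{ij} = λ_i(z_j − z_i). -/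
open MeasureTheory Real Filter
open scoped FourierTransform ENNReal Topology

noncomputable section

/-!
Write `yₖ = λₖ|x - zₖ|` and `d = |zᵢ - zⱼ|`. Since `Uₖ^{p-1} = α^{p-1} λₖ^{2s} ⟨yₖ⟩^{-4s}`, on each
inner/outer region every estimate compares two products of powers of `λᵢ ≤ λⱼ`, `yᵢ`, `yⱼ`, `d`, `ℛ`
and `ℛᵢⱼ`; taking logarithms turns it into a linear inequality between logarithms whose coefficients
are nonnegative because `n > 6s`. The geometric input is `1 ≤ 2ℛ ≤ ℛᵢⱼ` (every `ℛₖₗ ≥ 1`),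
`ℛᵢⱼ ≤ max(√(λⱼ/λᵢ), √(λᵢλⱼ) d)`, and the triangle inequality: if `ℛᵢⱼ` is given by the distance term
and `x` lies in the inner region of `Uⱼ`, then `|x - zᵢ| ≥ d/2`. Where two terms of the right-hand
side are relevant, the region is split exactly where one of them alone dominates the left-hand side.
-/

lemma log_le_nat_mul_log_two {c : ℝ} (k : ℕ) (hc : 0 < c) (hck : c ≤ 2 ^ k) :
    log c ≤ k * log 2 := by
  simpa only [Real.log_pow] using Real.log_le_log hc hck

lemma two_mul_log_le_log_one_add_sq {c y : ℝ} (hc : 0 < c) (hcy : c ≤ y) :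
    2 * log c ≤ log (1 + y ^ 2) := by
  have h := Real.log_le_log (pow_pos hc 2) (by nlinarith : c ^ 2 ≤ 1 + y ^ 2)
  rwa [Real.log_pow, Nat.cast_ofNat] at h

lemma log_le_of_le_sqrt_div {a b K : ℝ} (ha : 0 < a) (hb : 0 < b) (hK : 0 < K)
    (h : K ≤ √(b / a)) : log K ≤ (log b - log a) / 2 := by
  have h1 := Real.log_le_log hK h
  rwa [Real.log_sqrt (by positivity), Real.log_div hb.ne' ha.ne'] at h1

lemma log_le_of_le_sqrt_mul_mul {a b d K : ℝ} (ha : 0 < a) (hb : 0 < b) (hd : 0 < d) (hK : 0 < K)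
    (h : K ≤ √(a * b) * d) : log K ≤ (log a + log b) / 2 + log d := by
  have h1 := Real.log_le_log hK h
  rwa [Real.log_mul (Real.sqrt_pos.mpr (by positivity)).ne' hd.ne',
    Real.log_sqrt (by positivity), Real.log_mul ha.ne' hb.ne'] at h1

lemma log_one_add_sq_le {t : ℝ} (ht : 2 ≤ t) : log (1 + t^2) ≤ log (5/4) + 2 * log t := by
  have h := Real.log_le_log (by positivity) (by nlinarith : 1 + t^2 ≤ 5/4 * t^2)
  rwa [Real.log_mul (by norm_num) (by positivity), Real.log_pow, Nat.cast_ofNat] at h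

lemma log_one_add_sq_le_of_lt {y R : ℝ} (hy : 0 ≤ y) (hyR : y < R) (hR : 1 ≤ 2 * R) :
    log (1 + y^2) ≤ 2 * (log 3 + log R) := by
  have h := Real.log_le_log (by positivity)
    (by nlinarith [pow_le_pow_left₀ hy hyR.le 2] : 1 + y^2 ≤ (3*R)^2)
  rwa [Real.log_pow, Nat.cast_ofNat, Real.log_mul three_ne_zero (by linarith)] at h

section InteractionRadius

variable {n : ℕ}

lemma one_le_interR {z₁ z₂ : Euc n} {l₁ l₂ : ℝ} (h₁ : 0 < l₁) (h₂ : 0 < l₂) :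
    1 ≤ interR z₁ z₂ l₁ l₂ := by
  refine le_max_of_le_left ?_
  rcases le_total l₁ l₂ with h | h
  · exact le_max_of_le_right (Real.one_le_sqrt.mpr ((one_le_div h₁).mpr h))
  · exact le_max_of_le_left (Real.one_le_sqrt.mpr ((one_le_div h₂).mpr h))

lemma interR_le_max_of_le {z₁ z₂ : Euc n} {l₁ l₂ : ℝ} (h₁ : 0 < l₁) (h : l₁ ≤ l₂) :
    interR z₁ z₂ l₁ l₂ ≤ max (√(l₂/l₁)) (√(l₁*l₂) * ‖z₁ - z₂‖) := by
  refine max_le (max_le (le_max_of_le_left (Real.sqrt_le_sqrt ?_)) (le_max_left _ _))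
    (le_max_right _ _)
  calc l₁ / l₂ ≤ 1 := div_le_one_of_le₀ h (h₁.trans_le h).le
    _ ≤ l₂ / l₁ := (one_le_div h₁).mpr h

variable {ν : ℕ} {z : Fin ν → Euc n} {lam : Fin ν → ℝ} {i j : Fin ν}

lemma two_mul_scrR_le_interR (hlam : ∀ k, 0 < lam k) (hij : i ≠ j) :
    2 * scrR n ν z lam ≤ interR (z i) (z j) (lam i) (lam j) := by
  rw [scrR, ← mul_assoc, show (2:ℝ) * (1/2) = 1 by norm_num, one_mul]
  refine csInf_le ⟨1, ?_⟩ ⟨i, j, hij, rfl⟩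
  rintro r ⟨k, l, -, rfl⟩
  exact one_le_interR (hlam k) (hlam l)

lemma one_le_two_mul_scrR (hlam : ∀ k, 0 < lam k) (hij : i ≠ j) : 1 ≤ 2 * scrR n ν z lam := by
  rw [scrR, ← mul_assoc, show (2:ℝ) * (1/2) = 1 by norm_num, one_mul]
  refine le_csInf ⟨_, ⟨i, j, hij, rfl⟩⟩ ?_
  rintro r ⟨k, l, -, rfl⟩
  exact one_le_interR (hlam k) (hlam l)

end InteractionRadius

lemma sq_le_div_mul_one_add_sq {a b d K : ℝ} (ha : 0 < a) (hb : 0 < b) (hK : 0 < K)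
    (hKm : K ≤ max (√(b/a)) (√(a*b) * d)) : K ^ 2 ≤ b / a * (1 + (a*d)^2) := by
  rcases le_max_iff.mp hKm with hc | hc
  · have h := pow_le_pow_left₀ hK.le hc 2
    rw [Real.sq_sqrt (by positivity)] at h
    nlinarith [mul_nonneg (div_pos hb ha).le (sq_nonneg (a*d))]
  · have h := pow_le_pow_left₀ hK.le hc 2
    rw [mul_pow, Real.sq_sqrt (by positivity)] at h
    have h3 : a*b*d^2 = b/a*(a*d)^2 := by field_simp
    nlinarith [div_pos hb ha]

lemma half_dist_le_of_inner {a b d ri rj R K : ℝ} (ha : 0 < a) (hab : a ≤ b)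
    (htri : d ≤ ri + rj) (hR : 0 < R) (hRK : 2 * R ≤ K) (hK : K ≤ √(a * b) * d)
    (hj : b * rj < R) : 0 < d ∧ d / 2 ≤ ri := by
  have hb : 0 < b := ha.trans_le hab
  have hd : 0 < d := pos_of_mul_pos_right (by linarith) (Real.sqrt_nonneg _)
  have hsab : √(a * b) ≤ b := by
    simpa only [Real.sqrt_mul_self hb.le] using
      Real.sqrt_le_sqrt (mul_le_mul_of_nonneg_right hab hb.le)
  have hrj : rj < d / 2 := by
    have h1 : b * rj < b * (d / 2) := by nlinarith [mul_le_mul_of_nonneg_right hsab hd.le]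
    exact lt_of_mul_lt_mul_left h1 hb.le
  exact ⟨hd, by linarith⟩

lemma two_mul_le_and_two_le_of_nine_mul_le {a d ri rj : ℝ} (ha : 0 < a) (hd : 0 ≤ d)
    (hri : 0 ≤ ri) (htrj : rj ≤ ri + d)
    (hsp : 9 * (1 + (a*ri)^2) ≤ (a*rj) * √(1 + (a*d)^2)) : 2 * ri ≤ d ∧ 2 ≤ a * d := by
  set u := √(1 + (a*ri)^2)
  set v := √(1 + (a*d)^2)
  have hu2 : u^2 = 1 + (a*ri)^2 := Real.sq_sqrt (by positivity)
  have hv2 : v^2 = 1 + (a*d)^2 := Real.sq_sqrt (by positivity)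
  have hari : a*ri ≤ u := Real.le_sqrt_of_sq_le (by linarith)
  have had : a*d ≤ v := Real.le_sqrt_of_sq_le (by linarith)
  have harj : a*rj ≤ u + v := by nlinarith [mul_le_mul_of_nonneg_left htrj ha.le]
  have h9 : 9 * u^2 ≤ (u + v) * v := by
    rw [hu2]; exact hsp.trans (mul_le_mul_of_nonneg_right harj (Real.sqrt_nonneg _))
  -- `uv ≤ (u² + v²)/2` turns `h9` into `v² ≥ 5u²`
  have h5 : 5 * (1 + (a*ri)^2) ≤ 1 + (a*d)^2 := by nlinarith [sq_nonneg (u - v)]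
  have hadri : a * (2 * ri) ≤ a * d := by
    nlinarith [mul_nonneg ha.le hri, mul_nonneg ha.le hd]
  exact ⟨le_of_mul_le_mul_left hadri ha, by nlinarith [mul_nonneg ha.le hd]⟩

lemma jb_rpow_neg_two_mul (t c : ℝ) : jb t ^ (-(2 * c)) = (1 + t ^ 2) ^ (-c) := by
  rw [jb, Real.sqrt_eq_rpow, ← Real.rpow_mul (by positivity)]
  ring_nf

lemma bubbleConst_pos {n : ℕ} {s : ℝ} (hs : 0 < s) (hn : 2 * s < n) : 0 < bubbleConst n s := by
  have h1 : 0 < Real.Gamma (((n:ℝ) + 2*s)/2) := Real.Gamma_pos_of_pos (by linarith)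
  have h2 : 0 < Real.Gamma (((n:ℝ) - 2*s)/2) := Real.Gamma_pos_of_pos (by linarith)
  unfold bubbleConst
  positivity

/- Profiles of `U^{p-1}/α^{p-1}` and of the weights as functions of `y = λ|x - z|`, without the
indicator of the inner/outer region. -/

def radialU (s lam y : ℝ) : ℝ := lam ^ (2*s) * (1 + y^2) ^ (-(2*s))

def radialWIn (n s R lam y : ℝ) : ℝ := lam ^ ((n - 2*s)/2) * R ^ (2*s - n) * (1 + y^2) ^ (-s)

def radialWOut (n s R lam y : ℝ) : ℝ := lam ^ ((n - 2*s)/2) * R ^ (-(4*s)) * y ^ (4*s - n)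

def radialVIn (n s R lam y : ℝ) : ℝ :=
  lam ^ ((n + 2*s)/2) * R ^ (2*s - n) * (1 + y^2) ^ (-(2*s))

def radialVOut (n s R lam y : ℝ) : ℝ := lam ^ ((n + 2*s)/2) * R ^ (-(4*s)) * y ^ (2*s - n)

lemma bubble_rpow_pexp_sub_one {n : ℕ} {s lam : ℝ} (hs : 0 < s) (hn : 2*s < n) (hlam : 0 < lam)
    (z x : Euc n) :
    bubble n s z lam x ^ (pexp n s - 1)
      = bubbleConst n s ^ (pexp n s - 1) * radialU s lam (lam * ‖x - z‖) := by
  have hT : (0:ℝ) < 1 + (lam * ‖x - z‖)^2 := by positivity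
  have hg : (0:ℝ) ≤ lam / (1 + (lam * ‖x - z‖)^2) := by positivity
  have hexp : ((n:ℝ) - 2*s)/2 * (pexp n s - 1) = 2*s := by
    have hne : (n:ℝ) - 2*s ≠ 0 := by linarith
    rw [pexp, div_sub_one hne]
    field_simp
    ring
  rw [bubble, show lam^2 * ‖x - z‖^2 = (lam * ‖x - z‖)^2 by ring,
    Real.mul_rpow (bubbleConst_pos hs hn).le (Real.rpow_nonneg hg _), ← Real.rpow_mul hg, hexp,
    Real.div_rpow hlam.le hT.le, div_eq_mul_inv, ← Real.rpow_neg hT.le, radialU]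

section Weights

variable {n : ℕ} {s R lam : ℝ} {z x : Euc n}

lemma win_of_lt (hn : (n:ℝ) ≠ 6*s) (h : lam * ‖x - z‖ < R) :
    win n s R z lam x = radialWIn n s R lam (lam * ‖x - z‖) := by
  rw [win, if_neg hn, if_pos h, jb_rpow_neg_two_mul, radialWIn]

lemma win_of_not_lt (hn : (n:ℝ) ≠ 6*s) (h : ¬ lam * ‖x - z‖ < R) : win n s R z lam x = 0 := by
  rw [win, if_neg hn, if_neg h]

lemma wout_of_le (hn : (n:ℝ) ≠ 6*s) (h : R ≤ lam * ‖x - z‖) :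
    wout n s R z lam x = radialWOut n s R lam (lam * ‖x - z‖) := by
  rw [wout, if_neg hn, if_pos h, radialWOut]

lemma wout_of_not_le (hn : (n:ℝ) ≠ 6*s) (h : ¬ R ≤ lam * ‖x - z‖) : wout n s R z lam x = 0 := by
  rw [wout, if_neg hn, if_neg h]

lemma vin_of_lt (hn : (n:ℝ) ≠ 6*s) (h : lam * ‖x - z‖ < R) :
    vin n s R z lam x = radialVIn n s R lam (lam * ‖x - z‖) := by
  rw [vin, if_neg hn, if_pos h, show -(4*s) = -(2*(2*s)) by ring, jb_rpow_neg_two_mul, radialVIn]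

lemma vout_of_le (hn : (n:ℝ) ≠ 6*s) (h : R ≤ lam * ‖x - z‖) :
    vout n s R z lam x = radialVOut n s R lam (lam * ‖x - z‖) := by
  rw [vout, if_neg hn, if_pos h, radialVOut]

lemma vin_nonneg (hlam : 0 ≤ lam) (hR : 0 ≤ R) : 0 ≤ vin n s R z lam x := by
  simp only [vin, jb]
  split_ifs <;> positivity

lemma vout_nonneg (hlam : 0 ≤ lam) (hR : 0 ≤ R) : 0 ≤ vout n s R z lam x := by
  simp only [vout]
  split_ifs <;> positivity

end Weights

section RadialEstimates

variable {n s a b d ri rj R K : ℝ}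

lemma Uj_wiIn_le_vjIn (hs : 0 < s) (h6 : 6*s < n) (ha : 0 < a) (hab : a ≤ b)
    (htri : d ≤ ri + rj) (hR1 : 1 ≤ 2*R) (hKm : K ≤ max (√(b/a)) (√(a*b) * d))
    (hRK : 2*R ≤ K) (hj : b * rj < R) :
    radialU s b (b*rj) * radialWIn n s R a (a*ri)
      ≤ 2 ^ (8*s+2*n) * (K ^ (-(2*s)) * radialVIn n s R b (b*rj)) := by
  have hb : 0 < b := ha.trans_le hab
  have hR0 : 0 < R := by linarith
  have hK0 : 0 < K := by linarith
  have hTi : (0:ℝ) < 1 + (a*ri)^2 := by positivity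
  have hTj : (0:ℝ) < 1 + (b*rj)^2 := by positivity
  have hlab : log a ≤ log b := Real.log_le_log ha hab
  have hlTi : 0 ≤ log (1 + (a*ri)^2) := Real.log_nonneg (by nlinarith)
  have key : (n-2*s)/2 * log a + 2*s * log K
      ≤ (8*s+2*n) * log 2 + (n-2*s)/2 * log b + s * log (1 + (a*ri)^2) := by
    have hm : 0 ≤ ((n-2*s)/2 - s) * (log b - log a) := mul_nonneg (by linarith) (by linarith)
    have h2 : 0 ≤ (6*s+2*n) * log 2 := mul_nonneg (by linarith) (Real.log_pos one_lt_two).le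
    have h2' : 0 ≤ (2*s) * log 2 := mul_nonneg (by linarith) (Real.log_pos one_lt_two).le
    rcases le_max_iff.mp hKm with hc | hc
    · have hK := mul_le_mul_of_nonneg_left (log_le_of_le_sqrt_div ha hb hK0 hc)
        (by linarith : (0:ℝ) ≤ 2*s)
      have hsT : 0 ≤ s * log (1 + (a*ri)^2) := mul_nonneg hs.le hlTi
      linarith
    · obtain ⟨hd0, hri2⟩ := half_dist_le_of_inner ha hab htri hR0 hRK hc hj
      have hK := mul_le_mul_of_nonneg_left (log_le_of_le_sqrt_mul_mul ha hb hd0 hK0 hc)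
        (by linarith : (0:ℝ) ≤ 2*s)
      have hTi' := two_mul_log_le_log_one_add_sq (by positivity : 0 < a * (d/2))
        (mul_le_mul_of_nonneg_left hri2 ha.le)
      rw [Real.log_mul ha.ne' (by positivity), Real.log_div hd0.ne' two_ne_zero] at hTi'
      have hT := mul_le_mul_of_nonneg_left hTi' (by linarith : (0:ℝ) ≤ s/2)
      linarith
  unfold radialU radialWIn radialVIn
  simp only [Real.rpow_def_of_pos ha, Real.rpow_def_of_pos hb, Real.rpow_def_of_pos hR0,
    Real.rpow_def_of_pos hK0, Real.rpow_def_of_pos hTi, Real.rpow_def_of_pos hTj,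
    Real.rpow_def_of_pos two_pos, ← Real.exp_add, Real.exp_le_exp]
  linarith

lemma Uj_wiIn_le_viIn (hs : 0 < s) (h6 : 6*s < n) (ha : 0 < a) (hab : a ≤ b) (hR1 : 1 ≤ 2*R)
    (hsp : b * (R * √(1 + (a*ri)^2)) ≤ a * (1 + (b*rj)^2)) :
    radialU s b (b*rj) * radialWIn n s R a (a*ri)
      ≤ 2 ^ (8*s+2*n) * (R ^ (-(2*s)) * radialVIn n s R a (a*ri)) := by
  have hb : 0 < b := ha.trans_le hab
  have hR0 : 0 < R := by linarith
  have hTi : (0:ℝ) < 1 + (a*ri)^2 := by positivity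
  have hTj : (0:ℝ) < 1 + (b*rj)^2 := by positivity
  have hlsp := Real.log_le_log (by positivity) hsp
  rw [Real.log_mul hb.ne' (by positivity), Real.log_mul hR0.ne' (by positivity),
    Real.log_sqrt hTi.le, Real.log_mul ha.ne' hTj.ne'] at hlsp
  have key := mul_le_mul_of_nonneg_left hlsp (by linarith : (0:ℝ) ≤ 2*s)
  have h2 : 0 ≤ (8*s+2*n) * log 2 := mul_nonneg (by linarith) (Real.log_pos one_lt_two).le
  unfold radialU radialWIn radialVIn
  simp only [Real.rpow_def_of_pos ha, Real.rpow_def_of_pos hb, Real.rpow_def_of_pos hR0,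
    Real.rpow_def_of_pos hTi, Real.rpow_def_of_pos hTj,
    Real.rpow_def_of_pos two_pos, ← Real.exp_add, Real.exp_le_exp]
  linarith

lemma Uj_wiIn_le_vjOut (hs : 0 < s) (h6 : 6*s < n) (ha : 0 < a) (hab : a ≤ b) (hri : 0 ≤ ri)
    (hR1 : 1 ≤ 2*R) (hi : a * ri < R) (hjout : R ≤ b * rj)
    (hsp : a * (1 + (b*rj)^2) ≤ b * (R * √(1 + (a*ri)^2))) :
    radialU s b (b*rj) * radialWIn n s R a (a*ri)
      ≤ 2 ^ (8*s+2*n) * (R ^ (-(2*s)) * radialVOut n s R b (b*rj)) := by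
  have hb : 0 < b := ha.trans_le hab
  have hR0 : 0 < R := by linarith
  have hTi : (0:ℝ) < 1 + (a*ri)^2 := by positivity
  have hTj : (0:ℝ) < 1 + (b*rj)^2 := by positivity
  have hyj : 0 < b*rj := hR0.trans_le hjout
  have hlab : log a ≤ log b := Real.log_le_log ha hab
  have hlyj := two_mul_log_le_log_one_add_sq hyj le_rfl
  have hlsp := Real.log_le_log (by positivity) hsp
  rw [Real.log_mul ha.ne' hTj.ne', Real.log_mul hb.ne' (by positivity),
    Real.log_mul hR0.ne' (by positivity), Real.log_sqrt hTi.le] at hlsp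
  have key : (n-2*s)/2 * log a - 2*s * log (1 + (b*rj)^2) - s * log (1 + (a*ri)^2)
        + (n-2*s) * log (b*rj)
      ≤ (8*s+2*n) * log 2 + (n-2*s)/2 * log b + (n-8*s) * log R := by
    have p1 := mul_le_mul_of_nonneg_left hlyj (by linarith : (0:ℝ) ≤ (n-2*s)/2)
    have p2 := mul_le_mul_of_nonneg_left hlsp (by linarith : (0:ℝ) ≤ (n-2*s)/2 - 2*s)
    rcases le_total (4*s) ((n-2*s)/2) with hms | hms
    · have hlTi := log_one_add_sq_le_of_lt (mul_nonneg ha.le hri) hi hR1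
      have hlog3 : log 3 ≤ 2 * log 2 := by
        exact_mod_cast log_le_nat_mul_log_two 2 (by norm_num) (by norm_num)
      have p3 := mul_le_mul_of_nonneg_left hlTi (by linarith : (0:ℝ) ≤ ((n-2*s)/2 - 4*s)/2)
      have p4 := mul_le_mul_of_nonneg_left hlab (by linarith : (0:ℝ) ≤ 2*s)
      have p5 := mul_le_mul_of_nonneg_left hlog3 (by linarith : (0:ℝ) ≤ (n-2*s)/2 - 4*s)
      have p6 : 0 ≤ (2*n - 2*((n-2*s)/2 - 4*s)) * log 2 :=
        mul_nonneg (by linarith) (Real.log_pos one_lt_two).le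
      have p7 : 0 ≤ (8*s) * log 2 := mul_nonneg (by linarith) (Real.log_pos one_lt_two).le
      linarith
    · have hlR := two_mul_log_le_log_one_add_sq hR0 hjout
      have p3 := mul_le_mul_of_nonneg_left (show log R ≤ log b - log a
          + log (1 + (a*ri)^2) / 2 by linarith) (by linarith : (0:ℝ) ≤ 4*s - (n-2*s)/2)
      have p4 := mul_le_mul_of_nonneg_left hlab (by linarith : (0:ℝ) ≤ (n-2*s)/2 - 2*s)
      have p5 : 0 ≤ (8*s+2*n) * log 2 := mul_nonneg (by linarith) (Real.log_pos one_lt_two).le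
      linarith
  unfold radialU radialWIn radialVOut
  simp only [Real.rpow_def_of_pos ha, Real.rpow_def_of_pos hb, Real.rpow_def_of_pos hR0,
    Real.rpow_def_of_pos hTi, Real.rpow_def_of_pos hTj, Real.rpow_def_of_pos hyj,
    Real.rpow_def_of_pos two_pos, ← Real.exp_add, Real.exp_le_exp]
  linarith

lemma Uj_wiOut_le_vjIn (hs : 0 < s) (h6 : 6*s < n) (ha : 0 < a) (hab : a ≤ b)
    (htri : d ≤ ri + rj) (hR1 : 1 ≤ 2*R) (hKm : K ≤ max (√(b/a)) (√(a*b) * d))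
    (hRK : 2*R ≤ K) (hiout : R ≤ a * ri) (hj : b * rj < R) :
    radialU s b (b*rj) * radialWOut n s R a (a*ri)
      ≤ 2 ^ (8*s+2*n) * (K ^ (-(2*s)) * radialVIn n s R b (b*rj)) := by
  have hb : 0 < b := ha.trans_le hab
  have hR0 : 0 < R := by linarith
  have hK0 : 0 < K := by linarith
  have hTj : (0:ℝ) < 1 + (b*rj)^2 := by positivity
  have hyi : 0 < a*ri := hR0.trans_le hiout
  have hlab : log a ≤ log b := Real.log_le_log ha hab
  have hlyi : log R ≤ log (a*ri) := Real.log_le_log hR0 hiout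
  have hlR : -log 2 ≤ log R := by
    have h := Real.log_le_log (by norm_num) (by linarith : (2:ℝ)⁻¹ ≤ R)
    rwa [Real.log_inv] at h
  have key : (n-2*s)/2 * log a + 2*s * log K + (4*s-n) * log (a*ri)
      ≤ (8*s+2*n) * log 2 + (n-2*s)/2 * log b + (6*s-n) * log R := by
    have hm : 0 ≤ ((n-2*s)/2 - s) * (log b - log a) := mul_nonneg (by linarith) (by linarith)
    have h2 : 0 ≤ (6*s+2*n) * log 2 := mul_nonneg (by linarith) (Real.log_pos one_lt_two).le
    rcases le_max_iff.mp hKm with hc | hc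
    · have p1 := mul_le_mul_of_nonneg_left (log_le_of_le_sqrt_div ha hb hK0 hc)
        (by linarith : (0:ℝ) ≤ 2*s)
      have p2 := mul_le_mul_of_nonneg_left hlyi (by linarith : (0:ℝ) ≤ n - 4*s)
      have p3 : 0 ≤ (2*s) * (log R + log 2) := mul_nonneg (by linarith) (by linarith)
      linarith
    · obtain ⟨hd0, hri2⟩ := half_dist_le_of_inner ha hab htri hR0 hRK hc hj
      have hlyi' : log a + (log d - log 2) ≤ log (a*ri) := by
        have h := Real.log_le_log (by positivity) (mul_le_mul_of_nonneg_left hri2 ha.le)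
        rwa [Real.log_mul ha.ne' (by positivity), Real.log_div hd0.ne' two_ne_zero] at h
      have p1 := mul_le_mul_of_nonneg_left (log_le_of_le_sqrt_mul_mul ha hb hd0 hK0 hc)
        (by linarith : (0:ℝ) ≤ 2*s)
      have p2 := mul_le_mul_of_nonneg_left hlyi (by linarith : (0:ℝ) ≤ n - 6*s)
      have p3 := mul_le_mul_of_nonneg_left hlyi' (by linarith : (0:ℝ) ≤ 2*s)
      linarith
  unfold radialU radialWOut radialVIn
  simp only [Real.rpow_def_of_pos ha, Real.rpow_def_of_pos hb, Real.rpow_def_of_pos hR0,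
    Real.rpow_def_of_pos hK0, Real.rpow_def_of_pos hTj, Real.rpow_def_of_pos hyi,
    Real.rpow_def_of_pos two_pos, ← Real.exp_add, Real.exp_le_exp]
  linarith

lemma Uj_wiOut_le_viOut (hs : 0 < s) (h6 : 6*s < n) (ha : 0 < a) (hab : a ≤ b)
    (hR1 : 1 ≤ 2*R) (hiout : R ≤ a * ri) (hsp : b * (R * (a*ri)) ≤ a * (1 + (b*rj)^2)) :
    radialU s b (b*rj) * radialWOut n s R a (a*ri)
      ≤ 2 ^ (8*s+2*n) * (R ^ (-(2*s)) * radialVOut n s R a (a*ri)) := by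
  have hb : 0 < b := ha.trans_le hab
  have hR0 : 0 < R := by linarith
  have hTj : (0:ℝ) < 1 + (b*rj)^2 := by positivity
  have hyi : 0 < a*ri := hR0.trans_le hiout
  have hlsp := Real.log_le_log (by positivity) hsp
  rw [Real.log_mul hb.ne' (by positivity), Real.log_mul hR0.ne' hyi.ne',
    Real.log_mul ha.ne' hTj.ne'] at hlsp
  have key := mul_le_mul_of_nonneg_left hlsp (by linarith : (0:ℝ) ≤ 2*s)
  have h2 : 0 ≤ (8*s+2*n) * log 2 := mul_nonneg (by linarith) (Real.log_pos one_lt_two).le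
  unfold radialU radialWOut radialVOut
  simp only [Real.rpow_def_of_pos ha, Real.rpow_def_of_pos hb, Real.rpow_def_of_pos hR0,
    Real.rpow_def_of_pos hTj, Real.rpow_def_of_pos hyi,
    Real.rpow_def_of_pos two_pos, ← Real.exp_add, Real.exp_le_exp]
  linarith

lemma Uj_wiOut_le_vjOut (hs : 0 < s) (h6 : 6*s < n) (ha : 0 < a) (hab : a ≤ b)
    (hR1 : 1 ≤ 2*R) (hiout : R ≤ a * ri) (hjout : R ≤ b * rj)
    (hsp : a * (1 + (b*rj)^2) ≤ b * (R * (a*ri))) :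
    radialU s b (b*rj) * radialWOut n s R a (a*ri)
      ≤ 2 ^ (8*s+2*n) * (R ^ (-(2*s)) * radialVOut n s R b (b*rj)) := by
  have hb : 0 < b := ha.trans_le hab
  have hR0 : 0 < R := by linarith
  have hTj : (0:ℝ) < 1 + (b*rj)^2 := by positivity
  have hyi : 0 < a*ri := hR0.trans_le hiout
  have hyj : 0 < b*rj := hR0.trans_le hjout
  have hlsp := Real.log_le_log (by positivity) hsp
  rw [Real.log_mul ha.ne' hTj.ne', Real.log_mul hb.ne' (by positivity),
    Real.log_mul hR0.ne' hyi.ne'] at hlsp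
  have p1 := mul_le_mul_of_nonneg_left (two_mul_log_le_log_one_add_sq hyj le_rfl)
    (by linarith : (0:ℝ) ≤ (n-2*s)/2)
  have p2 := mul_le_mul_of_nonneg_left hlsp (by linarith : (0:ℝ) ≤ (n-2*s)/2 - 2*s)
  have p3 := mul_le_mul_of_nonneg_left (Real.log_le_log hR0 hiout)
    (by linarith : (0:ℝ) ≤ (n-2*s)/2)
  have p4 := mul_le_mul_of_nonneg_left (Real.log_le_log ha hab) (by linarith : (0:ℝ) ≤ 2*s)
  have p5 : 0 ≤ (8*s+2*n) * log 2 := mul_nonneg (by linarith) (Real.log_pos one_lt_two).le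
  unfold radialU radialWOut radialVOut
  simp only [Real.rpow_def_of_pos ha, Real.rpow_def_of_pos hb, Real.rpow_def_of_pos hR0,
    Real.rpow_def_of_pos hTj, Real.rpow_def_of_pos hyi, Real.rpow_def_of_pos hyj,
    Real.rpow_def_of_pos two_pos, ← Real.exp_add, Real.exp_le_exp]
  linarith

lemma Ui_wjIn_le_vjIn (hs : 0 < s) (h6 : 6*s < n) (ha : 0 < a) (hab : a ≤ b) (hrj : 0 ≤ rj)
    (htri : d ≤ ri + rj) (hR1 : 1 ≤ 2*R) (hKm : K ≤ max (√(b/a)) (√(a*b) * d))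
    (hRK : 2*R ≤ K) (hj : b * rj < R) :
    radialU s a (a*ri) * radialWIn n s R b (b*rj)
      ≤ 2 ^ (8*s+2*n) * (K ^ (-(2*s)) * radialVIn n s R b (b*rj)) := by
  have hb : 0 < b := ha.trans_le hab
  have hR0 : 0 < R := by linarith
  have hK0 : 0 < K := by linarith
  have hTi : (0:ℝ) < 1 + (a*ri)^2 := by positivity
  have hTj : (0:ℝ) < 1 + (b*rj)^2 := by positivity
  have hsTj : √(1 + (b*rj)^2) ≤ 3/2 * K :=
    Real.sqrt_le_iff.mpr ⟨by positivity, by nlinarith [mul_nonneg hb.le hrj]⟩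
  have base : a * (K * √(1 + (b*rj)^2)) ≤ 6 * (b * (1 + (a*ri)^2)) := by
    have h1 : a * (K * √(1 + (b*rj)^2)) ≤ a * (K * (3/2 * K)) := by gcongr
    rcases le_max_iff.mp hKm with hc | hc
    · have haK : a * K^2 ≤ b := by
        have h := pow_le_pow_left₀ hK0.le hc 2
        rw [Real.sq_sqrt (by positivity), le_div_iff₀ ha] at h
        linarith
      nlinarith [mul_nonneg hb.le (sq_nonneg (a*ri))]
    · obtain ⟨hd0, hri2⟩ := half_dist_le_of_inner ha hab htri hR0 hRK hc hj
      have hK2 : K^2 ≤ a*b*d^2 := by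
        have h := pow_le_pow_left₀ hK0.le hc 2
        rwa [mul_pow, Real.sq_sqrt (by positivity)] at h
      have had : (a*d)^2 ≤ 4 * (1 + (a*ri)^2) := by
        nlinarith [pow_le_pow_left₀ (by positivity) (mul_le_mul_of_nonneg_left hri2 ha.le) 2]
      nlinarith [mul_le_mul_of_nonneg_left hK2 ha.le, mul_le_mul_of_nonneg_left had hb.le]
  have hlbase := Real.log_le_log (by positivity) base
  rw [Real.log_mul ha.ne' (by positivity), Real.log_mul hK0.ne' (by positivity),
    Real.log_sqrt hTj.le, Real.log_mul (by norm_num) (by positivity),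
    Real.log_mul hb.ne' hTi.ne'] at hlbase
  have hlog6 : log 6 ≤ 3 * log 2 := by
    exact_mod_cast log_le_nat_mul_log_two 3 (by norm_num) (by norm_num)
  have p1 := mul_le_mul_of_nonneg_left hlbase (by linarith : (0:ℝ) ≤ 2*s)
  have p2 := mul_le_mul_of_nonneg_left hlog6 (by linarith : (0:ℝ) ≤ 2*s)
  have p3 : 0 ≤ (2*s+2*n) * log 2 := mul_nonneg (by linarith) (Real.log_pos one_lt_two).le
  unfold radialU radialWIn radialVIn
  simp only [Real.rpow_def_of_pos ha, Real.rpow_def_of_pos hb, Real.rpow_def_of_pos hR0,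
    Real.rpow_def_of_pos hK0, Real.rpow_def_of_pos hTi, Real.rpow_def_of_pos hTj,
    Real.rpow_def_of_pos two_pos, ← Real.exp_add, Real.exp_le_exp]
  linarith

lemma Ui_wjOut_le_vjOut (hs : 0 < s) (h6 : 6*s < n) (ha : 0 < a) (hab : a ≤ b) (hR1 : 1 ≤ 2*R)
    (hjout : R ≤ b * rj) (hsp : (a*rj) * √(1 + (a*d)^2) ≤ 9 * (1 + (a*ri)^2)) :
    radialU s a (a*ri) * radialWOut n s R b (b*rj)
      ≤ 2 ^ (8*s+2*n) * ((1 + (a*d)^2) ^ (-s) * radialVOut n s R b (b*rj)) := by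
  have hb : 0 < b := ha.trans_le hab
  have hR0 : 0 < R := by linarith
  have hTi : (0:ℝ) < 1 + (a*ri)^2 := by positivity
  have hP : (0:ℝ) < 1 + (a*d)^2 := by positivity
  have hyj : 0 < b*rj := hR0.trans_le hjout
  have hrj : 0 < rj := pos_of_mul_pos_right hyj hb.le
  have hlsp := Real.log_le_log (by positivity) hsp
  rw [Real.log_mul (by positivity) (by positivity), Real.log_mul ha.ne' hrj.ne',
    Real.log_sqrt hP.le, Real.log_mul (by norm_num) hTi.ne'] at hlsp
  have hlyj : log (b*rj) = log b + log rj := Real.log_mul hb.ne' hrj.ne'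
  have hlog9 : log 9 ≤ 4 * log 2 := by
    exact_mod_cast log_le_nat_mul_log_two 4 (by norm_num) (by norm_num)
  have p1 := mul_le_mul_of_nonneg_left hlsp (by linarith : (0:ℝ) ≤ 2*s)
  have p2 := mul_le_mul_of_nonneg_left hlog9 (by linarith : (0:ℝ) ≤ 2*s)
  have p3 : 0 ≤ (2*n) * log 2 := mul_nonneg (by linarith) (Real.log_pos one_lt_two).le
  unfold radialU radialWOut radialVOut
  simp only [Real.rpow_def_of_pos ha, Real.rpow_def_of_pos hb, Real.rpow_def_of_pos hR0,
    Real.rpow_def_of_pos hTi, Real.rpow_def_of_pos hP, Real.rpow_def_of_pos hyj,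
    Real.rpow_def_of_pos two_pos, ← Real.exp_add, Real.exp_le_exp, hlyj]
  linarith

lemma Ui_wjOut_le_viIn (hs : 0 < s) (h6 : 6*s < n) (ha : 0 < a) (hab : a ≤ b) (hd : 0 ≤ d)
    (hri : 0 ≤ ri) (htri : d ≤ ri + rj) (htrj : rj ≤ ri + d) (hR1 : 1 ≤ 2*R)
    (hKm : K ≤ max (√(b/a)) (√(a*b) * d)) (hRK : 2*R ≤ K) (hjout : R ≤ b * rj)
    (hsp : 9 * (1 + (a*ri)^2) ≤ (a*rj) * √(1 + (a*d)^2)) :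
    radialU s a (a*ri) * radialWOut n s R b (b*rj)
      ≤ 2 ^ (8*s+2*n) * ((1 + (a*d)^2) ^ (-s) * radialVIn n s R a (a*ri)) := by
  have hb : 0 < b := ha.trans_le hab
  have hR0 : 0 < R := by linarith
  have hK0 : 0 < K := by linarith
  have hTi : (0:ℝ) < 1 + (a*ri)^2 := by positivity
  have hP : (0:ℝ) < 1 + (a*d)^2 := by positivity
  have hyj : 0 < b*rj := hR0.trans_le hjout
  obtain ⟨hrid, had⟩ := two_mul_le_and_two_le_of_nine_mul_le ha hd hri htrj hsp
  have hd0 : 0 < d := pos_of_mul_pos_right (by linarith) ha.le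
  have hlyj : log b + (log d - log 2) ≤ log (b*rj) := by
    have h := Real.log_le_log (by positivity)
      (mul_le_mul_of_nonneg_left (by linarith : d/2 ≤ rj) hb.le)
    rwa [Real.log_mul hb.ne' (by positivity), Real.log_div hd0.ne' two_ne_zero] at h
  have hlP := log_one_add_sq_le had
  rw [Real.log_mul ha.ne' hd0.ne'] at hlP
  have hlR : 2 * (log 2 + log R) ≤ log b - log a + log (1 + (a*d)^2) := by
    have h := Real.log_le_log (by positivity)
      ((pow_le_pow_left₀ (by linarith) hRK 2).trans (sq_le_div_mul_one_add_sq ha hb hK0 hKm))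
    rwa [Real.log_pow, Nat.cast_ofNat, Real.log_mul two_ne_zero hR0.ne',
      Real.log_mul (div_pos hb ha).ne' hP.ne', Real.log_div hb.ne' ha.ne'] at h
  have hlog54 : log (5/4) ≤ 1 * log 2 := by
    exact_mod_cast log_le_nat_mul_log_two 1 (by norm_num) (by norm_num)
  have p1 := mul_le_mul_of_nonneg_left hlyj (by linarith : (0:ℝ) ≤ n - 4*s)
  have p2 := mul_le_mul_of_nonneg_left hlR (by linarith : (0:ℝ) ≤ (n-2*s)/2 - 2*s)
  have p3 := mul_le_mul_of_nonneg_left hlP (by linarith : (0:ℝ) ≤ (n-2*s)/2 - s)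
  have p4 := mul_le_mul_of_nonneg_left hlog54 (by linarith : (0:ℝ) ≤ (n-2*s)/2 - s)
  have p5 : 0 ≤ (8*s + 2*n - ((n-2*s)/2 + s)) * log 2 :=
    mul_nonneg (by linarith) (Real.log_pos one_lt_two).le
  unfold radialU radialWOut radialVIn
  simp only [Real.rpow_def_of_pos ha, Real.rpow_def_of_pos hb, Real.rpow_def_of_pos hR0,
    Real.rpow_def_of_pos hTi, Real.rpow_def_of_pos hP, Real.rpow_def_of_pos hyj,
    Real.rpow_def_of_pos two_pos, ← Real.exp_add, Real.exp_le_exp]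
  linarith

lemma Ui_wjOut_le_viOut (hs : 0 < s) (h6 : 6*s < n) (ha : 0 < a) (hab : a ≤ b) (hd : 0 ≤ d)
    (hri : 0 ≤ ri) (htri : d ≤ ri + rj) (htrj : rj ≤ ri + d) (hR1 : 1 ≤ 2*R)
    (hjout : R ≤ b * rj) (hiout : R ≤ a * ri)
    (hsp : 9 * (1 + (a*ri)^2) ≤ (a*rj) * √(1 + (a*d)^2)) :
    radialU s a (a*ri) * radialWOut n s R b (b*rj)
      ≤ 2 ^ (8*s+2*n) * ((1 + (a*d)^2) ^ (-s) * radialVOut n s R a (a*ri)) := by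
  have hb : 0 < b := ha.trans_le hab
  have hR0 : 0 < R := by linarith
  have hTi : (0:ℝ) < 1 + (a*ri)^2 := by positivity
  have hP : (0:ℝ) < 1 + (a*d)^2 := by positivity
  have hyj : 0 < b*rj := hR0.trans_le hjout
  have hyi : 0 < a*ri := hR0.trans_le hiout
  obtain ⟨hrid, had⟩ := two_mul_le_and_two_le_of_nine_mul_le ha hd hri htrj hsp
  have hd0 : 0 < d := pos_of_mul_pos_right (by linarith) ha.le
  have hlyj : log b + (log d - log 2) ≤ log (b*rj) := by
    have h := Real.log_le_log (by positivity)
      (mul_le_mul_of_nonneg_left (by linarith : d/2 ≤ rj) hb.le)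
    rwa [Real.log_mul hb.ne' (by positivity), Real.log_div hd0.ne' two_ne_zero] at h
  have hlP := log_one_add_sq_le had
  rw [Real.log_mul ha.ne' hd0.ne'] at hlP
  have hlyi : log (a*ri) ≤ log a + log d - log 2 := by
    have h := Real.log_le_log hyi (by nlinarith : a*ri ≤ a*d/2)
    rwa [Real.log_div (by positivity) two_ne_zero, Real.log_mul ha.ne' hd0.ne'] at h
  have hlog54 : log (5/4) ≤ 1 * log 2 := by
    exact_mod_cast log_le_nat_mul_log_two 1 (by norm_num) (by norm_num)
  have p0 := mul_le_mul_of_nonneg_left (two_mul_log_le_log_one_add_sq hyi le_rfl)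
    (by linarith : (0:ℝ) ≤ 2*s)
  have p1 := mul_le_mul_of_nonneg_left hlyi (by linarith : (0:ℝ) ≤ n - 6*s)
  have p2 := mul_le_mul_of_nonneg_left hlyj (by linarith : (0:ℝ) ≤ n - 4*s)
  have p3 := mul_le_mul_of_nonneg_left hlP (by linarith : (0:ℝ) ≤ s)
  have p4 : 0 ≤ ((n-2*s)/2 - 2*s) * (log b - log a) :=
    mul_nonneg (by linarith) (by linarith [Real.log_le_log ha hab])
  have p5 := mul_le_mul_of_nonneg_left hlog54 (by linarith : (0:ℝ) ≤ s)
  have p6 : 0 ≤ (8*s + 2*n - 3*s) * log 2 := mul_nonneg (by linarith) (Real.log_pos one_lt_two).le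
  unfold radialU radialWOut radialVOut
  simp only [Real.rpow_def_of_pos ha, Real.rpow_def_of_pos hb, Real.rpow_def_of_pos hR0,
    Real.rpow_def_of_pos hTi, Real.rpow_def_of_pos hP, Real.rpow_def_of_pos hyj,
    Real.rpow_def_of_pos hyi, Real.rpow_def_of_pos two_pos, ← Real.exp_add, Real.exp_le_exp]
  linarith

end RadialEstimates

section PairEstimates

variable {n : ℕ} {s a b R : ℝ} {zi zj x : Euc n}

lemma bubble_large_mul_win_small_le (hs : 0 < s) (h6 : 6*s < n) (ha : 0 < a) (hab : a ≤ b)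
    (hR1 : 1 ≤ 2*R) (hRK : 2*R ≤ interR zi zj a b) :
    bubble n s zj b x ^ (pexp n s - 1) * win n s R zi a x
      ≤ bubbleConst n s ^ (pexp n s - 1) * 2 ^ (8*s+2*(n:ℝ)) *
        (interR zi zj a b ^ (-(2*s)) * vin n s R zj b x + R ^ (-(2*s)) * vout n s R zj b x
          + R ^ (-(2*s)) * vin n s R zi a x) := by
  have hb : 0 < b := ha.trans_le hab
  have hR0 : 0 < R := by linarith
  have hn : (n:ℝ) ≠ 6*s := h6.ne'
  have htri : ‖zi - zj‖ ≤ ‖x - zi‖ + ‖x - zj‖ := by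
    simpa only [norm_sub_rev zi x] using norm_sub_le_norm_sub_add_norm_sub zi x zj
  have hKm := interR_le_max_of_le (z₁ := zi) (z₂ := zj) ha hab
  have hC : (0:ℝ) ≤ 2 ^ (8*s+2*(n:ℝ)) := by positivity
  have hK : 0 ≤ interR zi zj a b ^ (-(2*s)) := Real.rpow_nonneg (by linarith) _
  have hR : 0 ≤ R ^ (-(2*s)) := Real.rpow_nonneg hR0.le _
  have h1 := mul_nonneg hC (mul_nonneg hK (vin_nonneg (s := s) (z := zj) (x := x) hb.le hR0.le))
  have h2 := mul_nonneg hC (mul_nonneg hR (vout_nonneg (s := s) (z := zj) (x := x) hb.le hR0.le))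
  have h3 := mul_nonneg hC (mul_nonneg hR (vin_nonneg (s := s) (z := zi) (x := x) ha.le hR0.le))
  rw [bubble_rpow_pexp_sub_one hs (by linarith) hb, mul_assoc, mul_assoc]
  refine mul_le_mul_of_nonneg_left ?_ (Real.rpow_nonneg (bubbleConst_pos hs (by linarith)).le _)
  by_cases hi : a * ‖x - zi‖ < R
  · by_cases hj : b * ‖x - zj‖ < R
    · have key := Uj_wiIn_le_vjIn hs h6 ha hab htri hR1 hKm hRK hj
      rw [← win_of_lt hn hi, ← vin_of_lt hn hj] at key
      linarith
    rcases le_total (b * (R * √(1 + (a * ‖x - zi‖)^2))) (a * (1 + (b * ‖x - zj‖)^2))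
      with hsp | hsp
    · have key := Uj_wiIn_le_viIn hs h6 ha hab hR1 hsp
      rw [← win_of_lt hn hi, ← vin_of_lt hn hi] at key
      linarith
    · have key := Uj_wiIn_le_vjOut hs h6 ha hab (norm_nonneg _) hR1 hi (not_lt.mp hj) hsp
      rw [← win_of_lt hn hi, ← vout_of_le hn (not_lt.mp hj)] at key
      linarith
  · rw [win_of_not_lt hn hi, mul_zero]
    linarith

lemma bubble_large_mul_wout_small_le (hs : 0 < s) (h6 : 6*s < n) (ha : 0 < a) (hab : a ≤ b)
    (hR1 : 1 ≤ 2*R) (hRK : 2*R ≤ interR zi zj a b) :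
    bubble n s zj b x ^ (pexp n s - 1) * wout n s R zi a x
      ≤ bubbleConst n s ^ (pexp n s - 1) * 2 ^ (8*s+2*(n:ℝ)) *
        (interR zi zj a b ^ (-(2*s)) * vin n s R zj b x + R ^ (-(2*s)) * vout n s R zj b x
          + R ^ (-(2*s)) * vout n s R zi a x) := by
  have hb : 0 < b := ha.trans_le hab
  have hR0 : 0 < R := by linarith
  have hn : (n:ℝ) ≠ 6*s := h6.ne'
  have htri : ‖zi - zj‖ ≤ ‖x - zi‖ + ‖x - zj‖ := by
    simpa only [norm_sub_rev zi x] using norm_sub_le_norm_sub_add_norm_sub zi x zj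
  have hKm := interR_le_max_of_le (z₁ := zi) (z₂ := zj) ha hab
  have hC : (0:ℝ) ≤ 2 ^ (8*s+2*(n:ℝ)) := by positivity
  have hK : 0 ≤ interR zi zj a b ^ (-(2*s)) := Real.rpow_nonneg (by linarith) _
  have hR : 0 ≤ R ^ (-(2*s)) := Real.rpow_nonneg hR0.le _
  have h1 := mul_nonneg hC (mul_nonneg hK (vin_nonneg (s := s) (z := zj) (x := x) hb.le hR0.le))
  have h2 := mul_nonneg hC (mul_nonneg hR (vout_nonneg (s := s) (z := zj) (x := x) hb.le hR0.le))
  have h3 := mul_nonneg hC (mul_nonneg hR (vout_nonneg (s := s) (z := zi) (x := x) ha.le hR0.le))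
  rw [bubble_rpow_pexp_sub_one hs (by linarith) hb, mul_assoc, mul_assoc]
  refine mul_le_mul_of_nonneg_left ?_ (Real.rpow_nonneg (bubbleConst_pos hs (by linarith)).le _)
  by_cases hi : R ≤ a * ‖x - zi‖
  · by_cases hj : b * ‖x - zj‖ < R
    · have key := Uj_wiOut_le_vjIn hs h6 ha hab htri hR1 hKm hRK hi hj
      rw [← wout_of_le hn hi, ← vin_of_lt hn hj] at key
      linarith
    rcases le_total (b * (R * (a * ‖x - zi‖))) (a * (1 + (b * ‖x - zj‖)^2)) with hsp | hsp
    · have key := Uj_wiOut_le_viOut hs h6 ha hab hR1 hi hsp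
      rw [← wout_of_le hn hi, ← vout_of_le hn hi] at key
      linarith
    · have key := Uj_wiOut_le_vjOut hs h6 ha hab hR1 hi (not_lt.mp hj) hsp
      rw [← wout_of_le hn hi, ← vout_of_le hn (not_lt.mp hj)] at key
      linarith
  · rw [wout_of_not_le hn hi, mul_zero]
    linarith

lemma bubble_small_mul_win_large_le (hs : 0 < s) (h6 : 6*s < n) (ha : 0 < a) (hab : a ≤ b)
    (hR1 : 1 ≤ 2*R) (hRK : 2*R ≤ interR zi zj a b) :
    bubble n s zi a x ^ (pexp n s - 1) * win n s R zj b x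
      ≤ bubbleConst n s ^ (pexp n s - 1) * 2 ^ (8*s+2*(n:ℝ)) *
        (interR zi zj a b ^ (-(2*s)) * vin n s R zj b x) := by
  have hb : 0 < b := ha.trans_le hab
  have hR0 : 0 < R := by linarith
  have hn : (n:ℝ) ≠ 6*s := h6.ne'
  have htri : ‖zi - zj‖ ≤ ‖x - zi‖ + ‖x - zj‖ := by
    simpa only [norm_sub_rev zi x] using norm_sub_le_norm_sub_add_norm_sub zi x zj
  have hKm := interR_le_max_of_le (z₁ := zi) (z₂ := zj) ha hab
  rw [bubble_rpow_pexp_sub_one hs (by linarith) ha, mul_assoc, mul_assoc]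
  refine mul_le_mul_of_nonneg_left ?_ (Real.rpow_nonneg (bubbleConst_pos hs (by linarith)).le _)
  by_cases hj : b * ‖x - zj‖ < R
  · have key := Ui_wjIn_le_vjIn hs h6 ha hab (norm_nonneg _) htri hR1 hKm hRK hj
    rwa [← win_of_lt hn hj, ← vin_of_lt hn hj] at key
  · rw [win_of_not_lt hn hj, mul_zero]
    exact mul_nonneg (by positivity) (mul_nonneg (Real.rpow_nonneg (by linarith) _)
      (vin_nonneg hb.le hR0.le))

lemma bubble_small_mul_wout_large_le (hs : 0 < s) (h6 : 6*s < n) (ha : 0 < a) (hab : a ≤ b)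
    (hR1 : 1 ≤ 2*R) (hRK : 2*R ≤ interR zi zj a b) :
    bubble n s zi a x ^ (pexp n s - 1) * wout n s R zj b x
      ≤ bubbleConst n s ^ (pexp n s - 1) * 2 ^ (8*s+2*(n:ℝ)) *
        (jb ‖a • (zj - zi)‖ ^ (-(2*s)) *
          (vin n s R zi a x + vout n s R zi a x + vout n s R zj b x)) := by
  have hb : 0 < b := ha.trans_le hab
  have hR0 : 0 < R := by linarith
  have hn : (n:ℝ) ≠ 6*s := h6.ne'
  have htri : ‖zi - zj‖ ≤ ‖x - zi‖ + ‖x - zj‖ := by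
    simpa only [norm_sub_rev zi x] using norm_sub_le_norm_sub_add_norm_sub zi x zj
  have htrj : ‖x - zj‖ ≤ ‖x - zi‖ + ‖zi - zj‖ := norm_sub_le_norm_sub_add_norm_sub x zi zj
  have hKm := interR_le_max_of_le (z₁ := zi) (z₂ := zj) ha hab
  have hC : (0:ℝ) ≤ 2 ^ (8*s+2*(n:ℝ)) := by positivity
  have hP : 0 ≤ (1 + (a * ‖zi - zj‖)^2) ^ (-s) := by positivity
  have h1 := mul_nonneg hC (mul_nonneg hP (vin_nonneg (s := s) (z := zi) (x := x) ha.le hR0.le))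
  have h2 := mul_nonneg hC (mul_nonneg hP (vout_nonneg (s := s) (z := zi) (x := x) ha.le hR0.le))
  have h3 := mul_nonneg hC (mul_nonneg hP (vout_nonneg (s := s) (z := zj) (x := x) hb.le hR0.le))
  rw [bubble_rpow_pexp_sub_one hs (by linarith) ha, mul_assoc, mul_assoc, norm_smul,
    Real.norm_eq_abs, abs_of_pos ha, norm_sub_rev zj zi, jb_rpow_neg_two_mul]
  refine mul_le_mul_of_nonneg_left ?_ (Real.rpow_nonneg (bubbleConst_pos hs (by linarith)).le _)
  by_cases hj : R ≤ b * ‖x - zj‖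
  · rcases le_total ((a * ‖x - zj‖) * √(1 + (a * ‖zi - zj‖)^2)) (9 * (1 + (a * ‖x - zi‖)^2))
      with hsp | hsp
    · have key := Ui_wjOut_le_vjOut hs h6 ha hab hR1 hj hsp
      rw [← wout_of_le hn hj, ← vout_of_le hn hj] at key
      linarith
    by_cases hi : a * ‖x - zi‖ < R
    · have key := Ui_wjOut_le_viIn hs h6 ha hab (norm_nonneg _) (norm_nonneg _) htri htrj hR1
        hKm hRK hj hsp
      rw [← wout_of_le hn hj, ← vin_of_lt hn hi] at key
      linarith
    · have key := Ui_wjOut_le_viOut hs h6 ha hab (norm_nonneg _) (norm_nonneg _) htri htrj hR1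
        hj (not_lt.mp hi) hsp
      rw [← wout_of_le hn hj, ← vout_of_le hn (not_lt.mp hi)] at key
      linarith
  · rw [wout_of_not_le hn hj, mul_zero]
    linarith

end PairEstimates

theorem stmt11_general (n ν : ℕ) (s : ℝ) (hs : 0 < s) (h6 : 6*s < (n:ℝ)) :
    ∃ δ₀ C : ℝ, 0 < δ₀ ∧ 0 < C ∧
      ∀ δ : ℝ, 0 < δ → δ ≤ δ₀ →
      ∀ (z : Fin ν → Euc n) (lam : Fin ν → ℝ), (∀ i, 0 < lam i) →
        deltaInteracting n s ν z lam δ →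
        ∀ i j : Fin ν, i ≠ j → lam i ≤ lam j →
        ∀ x : Euc n,
          ((bubble n s (z j) (lam j) x) ^ (pexp n s - 1) *
              win n s (scrR n ν z lam) (z i) (lam i) x ≤
            C * (interR (z i) (z j) (lam i) (lam j) ^ (-(2*s)) *
                vin n s (scrR n ν z lam) (z j) (lam j) x +
              scrR n ν z lam ^ (-(2*s)) * vout n s (scrR n ν z lam) (z j) (lam j) x +
              scrR n ν z lam ^ (-(2*s)) * vin n s (scrR n ν z lam) (z i) (lam i) x)) ∧
          ((bubble n s (z j) (lam j) x) ^ (pexp n s - 1) *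
              wout n s (scrR n ν z lam) (z i) (lam i) x ≤
            C * (interR (z i) (z j) (lam i) (lam j) ^ (-(2*s)) *
                vin n s (scrR n ν z lam) (z j) (lam j) x +
              scrR n ν z lam ^ (-(2*s)) * vout n s (scrR n ν z lam) (z j) (lam j) x +
              scrR n ν z lam ^ (-(2*s)) * vout n s (scrR n ν z lam) (z i) (lam i) x)) ∧
          ((bubble n s (z i) (lam i) x) ^ (pexp n s - 1) *
              win n s (scrR n ν z lam) (z j) (lam j) x ≤
            C * (interR (z i) (z j) (lam i) (lam j) ^ (-(2*s)) *
              vin n s (scrR n ν z lam) (z j) (lam j) x)) ∧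
          ((bubble n s (z i) (lam i) x) ^ (pexp n s - 1) *
              wout n s (scrR n ν z lam) (z j) (lam j) x ≤
            C * (jb ‖lam i • (z j - z i)‖ ^ (-(2*s)) *
              (vin n s (scrR n ν z lam) (z i) (lam i) x +
                vout n s (scrR n ν z lam) (z i) (lam i) x +
                vout n s (scrR n ν z lam) (z j) (lam j) x))) := by
  refine ⟨1, bubbleConst n s ^ (pexp n s - 1) * 2 ^ (8*s+2*(n:ℝ)), one_pos,
    mul_pos (Real.rpow_pos_of_pos (bubbleConst_pos hs (by linarith)) _) (by positivity), ?_⟩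
  intro δ _ _ z lam hlam _ i j hij hlij x
  have hR1 := one_le_two_mul_scrR (z := z) hlam hij
  have hRK := two_mul_scrR_le_interR (z := z) hlam hij
  exact ⟨bubble_large_mul_win_small_le hs h6 (hlam i) hlij hR1 hRK,
    bubble_large_mul_wout_small_le hs h6 (hlam i) hlij hR1 hRK,
    bubble_small_mul_win_large_le hs h6 (hlam i) hlij hR1 hRK,
    bubble_small_mul_wout_large_le hs h6 (hlam i) hlij hR1 hRK⟩

/-- (interaction estimates (3.26)-(3.29)), `n > 6s`. -/
theorem stmt11 (n ν : ℕ) (s : ℝ) (hs : 0 < s) (hν : 2 ≤ ν) (h6 : 6*s < (n:ℝ)) :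
    ∃ δ₀ C : ℝ, 0 < δ₀ ∧ 0 < C ∧
      ∀ δ : ℝ, 0 < δ → δ ≤ δ₀ →
      ∀ (z : Fin ν → Euc n) (lam : Fin ν → ℝ), (∀ i, 0 < lam i) →
        deltaInteracting n s ν z lam δ →
        ∀ i j : Fin ν, i ≠ j → lam i ≤ lam j →
        ∀ x : Euc n,
          ((bubble n s (z j) (lam j) x) ^ (pexp n s - 1) *
              win n s (scrR n ν z lam) (z i) (lam i) x ≤
            C * (interR (z i) (z j) (lam i) (lam j) ^ (-(2*s)) *
                vin n s (scrR n ν z lam) (z j) (lam j) x +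
              scrR n ν z lam ^ (-(2*s)) * vout n s (scrR n ν z lam) (z j) (lam j) x +
              scrR n ν z lam ^ (-(2*s)) * vin n s (scrR n ν z lam) (z i) (lam i) x)) ∧
          ((bubble n s (z j) (lam j) x) ^ (pexp n s - 1) *
              wout n s (scrR n ν z lam) (z i) (lam i) x ≤
            C * (interR (z i) (z j) (lam i) (lam j) ^ (-(2*s)) *
                vin n s (scrR n ν z lam) (z j) (lam j) x +
              scrR n ν z lam ^ (-(2*s)) * vout n s (scrR n ν z lam) (z j) (lam j) x +
              scrR n ν z lam ^ (-(2*s)) * vout n s (scrR n ν z lam) (z i) (lam i) x)) ∧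
          ((bubble n s (z i) (lam i) x) ^ (pexp n s - 1) *
              win n s (scrR n ν z lam) (z j) (lam j) x ≤
            C * (interR (z i) (z j) (lam i) (lam j) ^ (-(2*s)) *
              vin n s (scrR n ν z lam) (z j) (lam j) x)) ∧
          ((bubble n s (z i) (lam i) x) ^ (pexp n s - 1) *
              wout n s (scrR n ν z lam) (z j) (lam j) x ≤
            C * (jb ‖lam i • (z j - z i)‖ ^ (-(2*s)) *
              (vin n s (scrR n ν z lam) (z i) (lam i) x +
                vout n s (scrR n ν z lam) (z i) (lam i) x +
                vout n s (scrR n ν z lam) (z j) (lam j) x))) :=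
  stmt11_general n ν s hs h6

end
end

section
/- Let n ∈ ℕ, s ∈ (0, n/2), α ∈ (0, n), β > 2s, N ∈ ℕ, and let 𝔶_1, …, 𝔶_N be distinct points of ℝⁿ. Suppose f and V are functions such that f(y) = ∫_{ℝⁿ} Φ_{n,s}(y−ω) V(ω) f(ω) dω for every y ∈ ℝⁿ \ {𝔶_1,…,𝔶_N}, and there exists C > 0 with |f(y)| ≤ C(1 + Σ_{i=1}^N |y−𝔶_i|^{−α}) and |V(y)| ≤ C⟨y⟩^{−β} for all y ∈ ℝⁿ \ {𝔶_1,…,𝔶_N}. Then f is bounded on ℝⁿ \ {𝔶_1,…,𝔶_N} (i.e., f ∈ L^∞(ℝⁿ)). -/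
open MeasureTheory Real Filter
open scoped FourierTransform ENNReal Topology

noncomputable section

/-!
Bootstrap on the order of the singularities at the points `𝔶ᵢ`. Inserting a bound
`|f| ≲ 1 + ∑ᵢ |· - 𝔶ᵢ|^{-α}` into the integral equation and using `|V| ≲ ⟨·⟩^{-β}` reduces the
question to the potential estimate
`∫ |ω - y|^{2s-n} ⟨ω⟩^{-β} |ω - z|^{-α} dω ≲ 1 + |y - z|^{-max (α - s) 0}`,
so the order of the singularities drops from `α` to `max (α - s) 0`; after `⌈α / s⌉` steps it
is `0`, and `f` is bounded. For the potential estimate, cut at the scale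
`ρ = min (|y - z| / 2) 1`: where `|ω - z| ≥ ρ`, trading `|ω - z|^{-(α - s)}` for `ρ^{-(α - s)}`
leaves two singularities of total order `< n`; where `|ω - z| < ρ`, the point `ω` stays `ρ` away
from `y`.
-/

open Module Set Metric

lemma rpow_neg_mul_rpow_neg_le_add {x w p q : ℝ} (hx : 0 < x) (hw : 0 < w) (hp : 0 ≤ p)
    (hq : 0 ≤ q) : x ^ (-p) * w ^ (-q) ≤ x ^ (-(p + q)) + w ^ (-(p + q)) := by
  have hmin : 0 < min x w := lt_min hx hw
  calc x ^ (-p) * w ^ (-q) ≤ min x w ^ (-p) * min x w ^ (-q) :=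
        mul_le_mul (rpow_le_rpow_of_nonpos hmin (min_le_left x w) (neg_nonpos.2 hp))
          (rpow_le_rpow_of_nonpos hmin (min_le_right x w) (neg_nonpos.2 hq))
          (rpow_nonneg hw.le _) (rpow_nonneg hmin.le _)
    _ = min x w ^ (-(p + q)) := by rw [← rpow_add hmin, neg_add]
    _ ≤ x ^ (-(p + q)) + w ^ (-(p + q)) := by
        rcases min_choice x w with h | h <;> rw [h]
        · exact le_add_of_nonneg_right (rpow_nonneg hw.le _)
        · exact le_add_of_nonneg_left (rpow_nonneg hx.le _)

/-- `x`, `w` and `J` stand for `|ω - y|`, `|ω - z|` and `⟨ω⟩^{-b}`, where `|y - z| ≥ 2ρ`. -/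
lemma rpow_neg_mul_mul_rpow_neg_le {x w ρ p q m J : ℝ} (hx : 0 < x) (hw : 0 < w) (hρ : 0 < ρ)
    (hρ1 : ρ ≤ 1) (hxw : 2 * ρ ≤ x + w) (hp : 0 ≤ p) (hm : 0 ≤ m) (hmq : m ≤ q)
    (hJ : 0 ≤ J) (hJ1 : J ≤ 1) :
    x ^ (-p) * J * w ^ (-q) ≤ ρ ^ (-m) *
      (x ^ (-(p + q - m)) * J + w ^ (-(p + q - m)) * J + if w < 1 then w ^ (-q) else 0) := by
  have hρm : 0 ≤ ρ ^ (-m) := rpow_nonneg hρ.le _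
  rcases le_or_gt ρ w with hρw | hwρ
  · have hwq : w ^ (-q) ≤ ρ ^ (-m) * w ^ (-(q - m)) := by
      rw [show -q = -m + -(q - m) by ring, rpow_add hw]
      exact mul_le_mul_of_nonneg_right (rpow_le_rpow_of_nonpos hρ hρw (neg_nonpos.2 hm))
        (rpow_nonneg hw.le _)
    have hsep := rpow_neg_mul_rpow_neg_le_add hx hw hp (sub_nonneg.2 hmq)
    rw [show p + (q - m) = p + q - m by ring] at hsep
    have hind : 0 ≤ if w < 1 then w ^ (-q) else 0 := by split_ifs <;> positivity
    calc x ^ (-p) * J * w ^ (-q) ≤ x ^ (-p) * J * (ρ ^ (-m) * w ^ (-(q - m))) := by gcongr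
      _ = ρ ^ (-m) * (x ^ (-p) * w ^ (-(q - m))) * J := by ring
      _ ≤ ρ ^ (-m) * (x ^ (-(p + q - m)) + w ^ (-(p + q - m))) * J := by gcongr
      _ ≤ _ := by nlinarith
  · have hx' : x ^ (-p) ≤ ρ ^ (-p) := rpow_le_rpow_of_nonpos hρ (by linarith) (neg_nonpos.2 hp)
    have hwe : 0 ≤ w ^ (-(p + q - m)) := rpow_nonneg hw.le _
    have hxe : 0 ≤ x ^ (-(p + q - m)) := rpow_nonneg hx.le _
    rw [if_pos (hwρ.trans_le hρ1)]
    have hwq : 0 ≤ w ^ (-q) := rpow_nonneg hw.le _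
    rcases le_or_gt p m with hpm | hmp
    · have : ρ ^ (-p) ≤ ρ ^ (-m) := rpow_le_rpow_of_exponent_ge hρ hρ1 (by linarith)
      calc x ^ (-p) * J * w ^ (-q) ≤ ρ ^ (-m) * 1 * w ^ (-q) := by gcongr; linarith
        _ ≤ _ := by
          nlinarith [mul_nonneg hρm (mul_nonneg hxe hJ), mul_nonneg hρm (mul_nonneg hwe hJ)]
    · have : ρ ^ (-p) ≤ ρ ^ (-m) * w ^ (-(p - m)) := by
        rw [show -p = -m + -(p - m) by ring, rpow_add hρ]
        exact mul_le_mul_of_nonneg_left (rpow_le_rpow_of_nonpos hw hwρ.le (by linarith)) hρm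
      have hsplit : w ^ (-(p - m)) * w ^ (-q) = w ^ (-(p + q - m)) := by
        rw [← rpow_add hw]; ring_nf
      calc x ^ (-p) * J * w ^ (-q) ≤ ρ ^ (-m) * w ^ (-(p - m)) * J * w ^ (-q) := by
            gcongr; linarith
        _ = ρ ^ (-m) * (w ^ (-(p + q - m)) * J) := by rw [← hsplit]; ring
        _ ≤ _ := by nlinarith [mul_nonneg hρm (mul_nonneg hxe hJ)]

lemma min_half_one_rpow_neg_le {r m : ℝ} (hr : 0 < r) (hm : 0 ≤ m) :
    min (r / 2) 1 ^ (-m) ≤ 2 ^ m * (1 + r ^ (-m)) := by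
  have h2m : 1 ≤ (2 : ℝ) ^ m := one_le_rpow one_le_two hm
  have hrm : 0 ≤ r ^ (-m) := rpow_nonneg hr.le _
  rcases min_choice (r / 2) 1 with h | h <;> rw [h]
  · rw [div_rpow hr.le zero_le_two, rpow_neg zero_le_two, div_inv_eq_mul]
    nlinarith
  · rw [one_rpow]
    nlinarith

lemma one_le_jb (t : ℝ) : 1 ≤ jb t :=
  Real.one_le_sqrt.2 (le_add_of_nonneg_right (sq_nonneg t))

lemma jb_rpow_nonneg (t r : ℝ) : 0 ≤ jb t ^ r :=
  rpow_nonneg (zero_le_one.trans (one_le_jb t)) r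

lemma jb_le_two_mul {t : ℝ} (ht : 1 ≤ t) : jb t ≤ 2 * t :=
  Real.sqrt_le_iff.2 ⟨by linarith, by nlinarith⟩

@[fun_prop]
lemma measurable_jb : Measurable jb := by
  unfold jb; fun_prop

lemma rpow_neg_mul_jb_rpow_neg_le {x w e b : ℝ} (hx : 0 ≤ x) (hw : 1 ≤ w) (he : 0 ≤ e)
    (hb : 0 ≤ b) :
    x ^ (-e) * w ^ (-b) ≤
      (if x < 1 then x ^ (-e) else 0) + 2 ^ (e + b) * jb x ^ (-(e + b)) + w ^ (-(e + b)) := by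
  have hwb : w ^ (-b) ≤ 1 := rpow_le_one_of_one_le_of_nonpos hw (neg_nonpos.2 hb)
  have hjb : 0 ≤ 2 ^ (e + b) * jb x ^ (-(e + b)) :=
    mul_nonneg (by positivity) (jb_rpow_nonneg _ _)
  have hwr : 0 ≤ w ^ (-(e + b)) := rpow_nonneg (zero_le_one.trans hw) _
  split_ifs with hx1
  · have : x ^ (-e) * w ^ (-b) ≤ x ^ (-e) := mul_le_of_le_one_right (rpow_nonneg hx _) hwb
    linarith
  · push Not at hx1
    have hxr : x ^ (-(e + b)) ≤ 2 ^ (e + b) * jb x ^ (-(e + b)) :=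
      calc x ^ (-(e + b)) = 2 ^ (e + b) * (2 * x) ^ (-(e + b)) := by
            rw [mul_rpow zero_le_two hx, ← mul_assoc, ← rpow_add two_pos]; simp
        _ ≤ 2 ^ (e + b) * jb x ^ (-(e + b)) :=
            mul_le_mul_of_nonneg_left (rpow_le_rpow_of_nonpos
              (zero_lt_one.trans_le (one_le_jb x)) (jb_le_two_mul hx1) (by linarith))
              (by positivity)
    linarith [rpow_neg_mul_rpow_neg_le_add (by linarith : (0 : ℝ) < x)
      (by linarith : (0 : ℝ) < w) he hb]

lemma integrable_and_integral_le_of_ae_le {α : Type*} [MeasurableSpace α] {μ : Measure α}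
    {g F : α → ℝ} (hF : Integrable F μ) (hg : AEStronglyMeasurable g μ) (h0 : 0 ≤ᵐ[μ] g)
    (hle : g ≤ᵐ[μ] F) : Integrable g μ ∧ ∫ x, g x ∂μ ≤ ∫ x, F x ∂μ := by
  have hg' : Integrable g μ := hF.mono' hg <| by
    filter_upwards [h0, hle] with x hx0 hx using by rwa [Real.norm_of_nonneg hx0]
  exact ⟨hg', integral_mono_ae hg' hF hle⟩

section HaarIntegrals

variable {E : Type*} [NormedAddCommGroup E] [NormedSpace ℝ E] [FiniteDimensional ℝ E]
  [MeasurableSpace E] [BorelSpace E] {μ : Measure E} [μ.IsAddHaarMeasure]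

lemma integrable_ite_norm_lt_one_rpow_neg {q : ℝ} (hd : 0 < finrank ℝ E)
    (hq : q < finrank ℝ E) :
    Integrable (fun u : E => if ‖u‖ < 1 then ‖u‖ ^ (-q) else 0) μ := by
  have : (fun u : E => if ‖u‖ < 1 then ‖u‖ ^ (-q) else 0) =
      (ball (0 : E) 1).indicator fun u => ‖u‖ ^ (-q) := by
    ext u
    by_cases h : ‖u‖ < 1
    · rw [if_pos h, indicator_of_mem (mem_ball_zero_iff.2 h)]
    · rw [if_neg h, indicator_of_notMem (mt mem_ball_zero_iff.1 h)]
  rw [this, integrable_indicator_iff measurableSet_ball]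
  refine integrableOn_ball_of_norm_le_rpow hd hq (C := 1) (ae_of_all _ fun u => ?_)
    (by fun_prop : Measurable fun u : E => ‖u‖ ^ (-q)).aestronglyMeasurable
  rw [one_mul, Real.norm_of_nonneg (rpow_nonneg (norm_nonneg u) _)]

lemma integrable_jb_rpow_neg {r : ℝ} (hr : finrank ℝ E < r) :
    Integrable (fun x : E => jb ‖x‖ ^ (-r)) μ := by
  convert integrable_rpow_neg_one_add_norm_sq (μ := μ) hr using 2 with x
  rw [jb, sqrt_eq_rpow, ← rpow_mul (by positivity)]
  ring_nf

lemma exists_forall_integral_norm_sub_rpow_mul_jb_le {e b : ℝ} (he : 0 < e)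
    (hed : e < finrank ℝ E) (hb : finrank ℝ E < e + b) :
    ∃ K, 0 ≤ K ∧ ∀ c : E, Integrable (fun ω => ‖ω - c‖ ^ (-e) * jb ‖ω‖ ^ (-b)) μ ∧
      ∫ ω, ‖ω - c‖ ^ (-e) * jb ‖ω‖ ^ (-b) ∂μ ≤ K := by
  set ν := fun u : E => if ‖u‖ < 1 then ‖u‖ ^ (-e) else 0
  set J := fun u : E => jb ‖u‖ ^ (-(e + b))
  have hν : Integrable ν μ :=
    integrable_ite_norm_lt_one_rpow_neg (by exact_mod_cast he.trans hed) hed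
  have hJ : Integrable J μ := integrable_jb_rpow_neg hb
  have hnonneg (c ω : E) : 0 ≤ ‖ω - c‖ ^ (-e) * jb ‖ω‖ ^ (-b) :=
    mul_nonneg (rpow_nonneg (norm_nonneg _) _) (jb_rpow_nonneg _ _)
  suffices key : ∀ c : E, Integrable (fun ω => ‖ω - c‖ ^ (-e) * jb ‖ω‖ ^ (-b)) μ ∧
      ∫ ω, ‖ω - c‖ ^ (-e) * jb ‖ω‖ ^ (-b) ∂μ ≤
        ∫ u, ν u ∂μ + 2 ^ (e + b) * ∫ u, J u ∂μ + ∫ u, J u ∂μ from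
    ⟨_, (integral_nonneg (hnonneg 0)).trans (key 0).2, key⟩
  intro c
  have h₁ : Integrable (fun ω => ν (ω - c)) μ := hν.comp_sub_right c
  have h₂ : Integrable (fun ω => 2 ^ (e + b) * J (ω - c)) μ := (hJ.comp_sub_right c).const_mul _
  have h₁₂ : Integrable (fun ω => ν (ω - c) + 2 ^ (e + b) * J (ω - c)) μ := h₁.add h₂
  have hF : Integrable (fun ω => ν (ω - c) + 2 ^ (e + b) * J (ω - c) + J ω) μ := h₁₂.add hJ
  have hbound := integrable_and_integral_le_of_ae_le hF
    (by fun_prop : Measurable fun ω : E => ‖ω - c‖ ^ (-e) * jb ‖ω‖ ^ (-b)).aestronglyMeasurable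
    (ae_of_all _ (hnonneg c))
    (ae_of_all _ fun ω => rpow_neg_mul_jb_rpow_neg_le (norm_nonneg (ω - c)) (one_le_jb ‖ω‖)
      he.le (by linarith))
  refine ⟨hbound.1, hbound.2.trans_eq ?_⟩
  rw [integral_add h₁₂ hJ, integral_add h₁ h₂, integral_const_mul,
    integral_sub_right_eq_self ν c, integral_sub_right_eq_self J c]

lemma exists_forall_integral_two_singularities_le {p q m b : ℝ} (hp : 0 < p) (hm : 0 ≤ m)
    (hmq : m ≤ q) (hq : q < finrank ℝ E) (he : p + q - m < finrank ℝ E)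
    (hpb : finrank ℝ E < p + b) :
    ∃ K, 0 ≤ K ∧ ∀ y z : E, y ≠ z →
      Integrable (fun ω => ‖ω - y‖ ^ (-p) * jb ‖ω‖ ^ (-b) * ‖ω - z‖ ^ (-q)) μ ∧
      ∫ ω, ‖ω - y‖ ^ (-p) * jb ‖ω‖ ^ (-b) * ‖ω - z‖ ^ (-q) ∂μ ≤ K * (1 + ‖y - z‖ ^ (-m)) := by
  have hd : 0 < finrank ℝ E := by exact_mod_cast (show (0 : ℝ) < finrank ℝ E by linarith)
  have : Nontrivial E := Module.nontrivial_of_finrank_pos hd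
  obtain ⟨KG, hKG0, hKG⟩ := exists_forall_integral_norm_sub_rpow_mul_jb_le (μ := μ)
    (e := p + q - m) (b := b) (by linarith) he (by linarith)
  set g := fun (c ω : E) => ‖ω - c‖ ^ (-(p + q - m)) * jb ‖ω‖ ^ (-b)
  set ν := fun u : E => if ‖u‖ < 1 then ‖u‖ ^ (-q) else 0
  have hν : Integrable ν μ := integrable_ite_norm_lt_one_rpow_neg hd hq
  have hν0 : 0 ≤ ∫ u, ν u ∂μ := integral_nonneg fun u => by
    dsimp only [ν]; split_ifs <;> positivity
  refine ⟨2 ^ m * (2 * KG + ∫ u, ν u ∂μ), by positivity, fun y z hyz => ?_⟩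
  have hr : 0 < ‖y - z‖ := norm_pos_iff.2 (sub_ne_zero.2 hyz)
  set ρ := min (‖y - z‖ / 2) 1
  have hρr : 2 * ρ ≤ ‖y - z‖ := by linarith [min_le_left (‖y - z‖ / 2) 1]
  have hgg : Integrable (fun ω => g y ω + g z ω) μ := (hKG y).1.add (hKG z).1
  have hνz : Integrable (fun ω => ν (ω - z)) μ := hν.comp_sub_right z
  have hF : Integrable (fun ω => g y ω + g z ω + ν (ω - z)) μ := hgg.add hνz
  have hbound := integrable_and_integral_le_of_ae_le (hF.const_mul (ρ ^ (-m)))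
    (by fun_prop : Measurable fun ω : E =>
      ‖ω - y‖ ^ (-p) * jb ‖ω‖ ^ (-b) * ‖ω - z‖ ^ (-q)).aestronglyMeasurable
    (ae_of_all _ fun ω => mul_nonneg (mul_nonneg (rpow_nonneg (norm_nonneg _) _)
      (jb_rpow_nonneg _ _)) (rpow_nonneg (norm_nonneg _) _))
    (by
      filter_upwards [μ.ae_ne y, μ.ae_ne z] with ω hωy hωz
      refine rpow_neg_mul_mul_rpow_neg_le (norm_pos_iff.2 (sub_ne_zero.2 hωy))
        (norm_pos_iff.2 (sub_ne_zero.2 hωz)) (lt_min (by positivity) one_pos)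
        (min_le_right _ _) (hρr.trans ?_) hp.le hm hmq (jb_rpow_nonneg _ _)
        (rpow_le_one_of_one_le_of_nonpos (one_le_jb _) (by linarith))
      simpa only [dist_eq_norm] using dist_triangle_left y z ω)
  refine ⟨hbound.1, hbound.2.trans ?_⟩
  calc ∫ ω, ρ ^ (-m) * (g y ω + g z ω + ν (ω - z)) ∂μ
      = ρ ^ (-m) * (∫ ω, g y ω ∂μ + ∫ ω, g z ω ∂μ + ∫ u, ν u ∂μ) := by
        rw [integral_const_mul, integral_add hgg hνz, integral_add (hKG y).1 (hKG z).1,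
          integral_sub_right_eq_self ν z]
    _ ≤ ρ ^ (-m) * (2 * KG + ∫ u, ν u ∂μ) := by
        gcongr; linarith [(hKG y).2, (hKG z).2]
    _ ≤ 2 ^ m * (1 + ‖y - z‖ ^ (-m)) * (2 * KG + ∫ u, ν u ∂μ) := by
        gcongr; exact min_half_one_rpow_neg_le hr hm
    _ = 2 ^ m * (2 * KG + ∫ u, ν u ∂μ) * (1 + ‖y - z‖ ^ (-m)) := by ring

end HaarIntegrals

section SingularWeight

variable {E : Type*} [NormedAddCommGroup E] {N : ℕ}

def singularWeight (Y : Fin N → E) (α : ℝ) (y : E) : ℝ :=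
  1 + ∑ i, ‖y - Y i‖ ^ (-α)

def BoundedBySingularWeight (f : E → ℝ) (Y : Fin N → E) (α : ℝ) : Prop :=
  ∃ C, 0 ≤ C ∧ ∀ y ∉ range Y, |f y| ≤ C * singularWeight Y α y

variable [NormedSpace ℝ E] [FiniteDimensional ℝ E] [MeasurableSpace E] [BorelSpace E]
  {μ : Measure E} [μ.IsAddHaarMeasure]

lemma exists_forall_integral_mul_singularWeight_le {p q m b : ℝ} (hp : 0 < p) (hm : 0 ≤ m)
    (hmq : m ≤ q) (hq : q < finrank ℝ E) (he : p + q - m < finrank ℝ E)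
    (hpb : finrank ℝ E < p + b) (Y : Fin N → E) :
    ∃ K, 0 ≤ K ∧ ∀ y ∉ range Y,
      Integrable (fun ω => ‖ω - y‖ ^ (-p) * jb ‖ω‖ ^ (-b) * singularWeight Y q ω) μ ∧
      ∫ ω, ‖ω - y‖ ^ (-p) * jb ‖ω‖ ^ (-b) * singularWeight Y q ω ∂μ ≤
        K * singularWeight Y m y := by
  obtain ⟨KG, hKG0, hKG⟩ :=
    exists_forall_integral_norm_sub_rpow_mul_jb_le (μ := μ) hp (by linarith) hpb
  obtain ⟨KE, hKE0, hKE⟩ :=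
    exists_forall_integral_two_singularities_le (μ := μ) hp hm hmq hq he hpb
  refine ⟨KG + (N + 1) * KE, by positivity, fun y hy => ?_⟩
  have hyY : ∀ i, y ≠ Y i := fun i h => hy ⟨i, h.symm⟩
  have hsum : Integrable (fun ω =>
      ∑ i, ‖ω - y‖ ^ (-p) * jb ‖ω‖ ^ (-b) * ‖ω - Y i‖ ^ (-q)) μ :=
    integrable_finsetSum _ fun i _ => (hKE y (Y i) (hyY i)).1
  have hsplit : (fun ω => ‖ω - y‖ ^ (-p) * jb ‖ω‖ ^ (-b) * singularWeight Y q ω) =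
      fun ω => ‖ω - y‖ ^ (-p) * jb ‖ω‖ ^ (-b) +
        ∑ i, ‖ω - y‖ ^ (-p) * jb ‖ω‖ ^ (-b) * ‖ω - Y i‖ ^ (-q) := by
    ext ω
    rw [singularWeight, mul_add, mul_one, Finset.mul_sum]
  rw [hsplit]
  refine ⟨(hKG y).1.add hsum, ?_⟩
  have hS : 0 ≤ ∑ i, ‖y - Y i‖ ^ (-m) :=
    Finset.sum_nonneg fun i _ => rpow_nonneg (norm_nonneg _) _
  calc ∫ ω, ‖ω - y‖ ^ (-p) * jb ‖ω‖ ^ (-b) +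
        ∑ i, ‖ω - y‖ ^ (-p) * jb ‖ω‖ ^ (-b) * ‖ω - Y i‖ ^ (-q) ∂μ
      ≤ KG + ∑ i, KE * (1 + ‖y - Y i‖ ^ (-m)) := by
        rw [integral_add (hKG y).1 hsum,
          integral_finsetSum _ fun i _ => (hKE y (Y i) (hyY i)).1]
        exact add_le_add (hKG y).2 (Finset.sum_le_sum fun i _ => (hKE y (Y i) (hyY i)).2)
    _ = KG + N * KE + KE * ∑ i, ‖y - Y i‖ ^ (-m) := by
        simp only [mul_add, mul_one, Finset.sum_add_distrib, Finset.mul_sum, Finset.sum_const,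
          Finset.card_univ, Fintype.card_fin, nsmul_eq_mul]
        ring
    _ ≤ (KG + (N + 1) * KE) * singularWeight Y m y := by
        rw [singularWeight]
        nlinarith [mul_nonneg hKG0 hS, mul_nonneg (Nat.cast_nonneg N : (0 : ℝ) ≤ N)
          (mul_nonneg hKE0 hS)]

theorem BoundedBySingularWeight.max_sub_of_integral_eq {k V f : E → ℝ} {Y : Fin N → E}
    {p b δ γ C α : ℝ} (hp : 0 < p) (hδ : 0 ≤ δ) (hpδ : p + δ < finrank ℝ E)
    (hpb : finrank ℝ E < p + b) (hγ : 0 ≤ γ) (hk : ∀ x, |k x| ≤ γ * ‖x‖ ^ (-p)) (hC : 0 ≤ C)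
    (hV : ∀ y ∉ range Y, |V y| ≤ C * jb ‖y‖ ^ (-b))
    (heq : ∀ y ∉ range Y, f y = ∫ ω, k (y - ω) * (V ω * f ω) ∂μ)
    (hα0 : 0 ≤ α) (hαd : α < finrank ℝ E) (hf : BoundedBySingularWeight f Y α) :
    BoundedBySingularWeight f Y (max (α - δ) 0) := by
  obtain ⟨C', hC', hf⟩ := hf
  have : Nontrivial E := Module.nontrivial_of_finrank_pos <| by
    exact_mod_cast (show (0 : ℝ) < finrank ℝ E by linarith)
  obtain ⟨K, hK0, hK⟩ := exists_forall_integral_mul_singularWeight_le (μ := μ)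
    (q := α) (m := max (α - δ) 0) hp (le_max_right _ _) (max_le (by linarith) hα0) hαd
    (by linarith [le_max_left (α - δ) 0]) hpb Y
  refine ⟨γ * C * C' * K, by positivity, fun y hy => ?_⟩
  have hpt : ∀ᵐ ω ∂μ, ‖k (y - ω) * (V ω * f ω)‖ ≤
      γ * C * C' * (‖ω - y‖ ^ (-p) * jb ‖ω‖ ^ (-b) * singularWeight Y α ω) := by
    filter_upwards [(finite_range Y).countable.ae_notMem μ] with ω hω
    rw [Real.norm_eq_abs, abs_mul, abs_mul, ← norm_sub_rev y ω]
    calc |k (y - ω)| * (|V ω| * |f ω|)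
        ≤ γ * ‖y - ω‖ ^ (-p) * (C * jb ‖ω‖ ^ (-b) * (C' * singularWeight Y α ω)) :=
          mul_le_mul (hk _) (mul_le_mul (hV ω hω) (hf ω hω) (abs_nonneg _)
            (mul_nonneg hC (jb_rpow_nonneg _ _))) (by positivity)
            (mul_nonneg hγ (rpow_nonneg (norm_nonneg _) _))
      _ = _ := by ring
  calc |f y| = ‖∫ ω, k (y - ω) * (V ω * f ω) ∂μ‖ := by rw [heq y hy, Real.norm_eq_abs]
    _ ≤ ∫ ω, ‖k (y - ω) * (V ω * f ω)‖ ∂μ := norm_integral_le_integral_norm _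
    _ ≤ ∫ ω, γ * C * C' * (‖ω - y‖ ^ (-p) * jb ‖ω‖ ^ (-b) * singularWeight Y α ω) ∂μ :=
        integral_mono_of_nonneg (ae_of_all _ fun _ => norm_nonneg _)
          ((hK y hy).1.const_mul _) hpt
    _ ≤ γ * C * C' * (K * singularWeight Y (max (α - δ) 0) y) := by
        rw [integral_const_mul]
        exact mul_le_mul_of_nonneg_left (hK y hy).2 (by positivity)
    _ = γ * C * C' * K * singularWeight Y (max (α - δ) 0) y := by ring

end SingularWeight

lemma holds_zero_of_max_sub_step {P : ℝ → Prop} {δ d : ℝ} (hδ : 0 < δ)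
    (hstep : ∀ α, 0 ≤ α → α < d → P α → P (max (α - δ) 0)) {α : ℝ} (hα0 : 0 ≤ α)
    (hαd : α < d) (hα : P α) : P 0 := by
  obtain ⟨k, hk⟩ := exists_nat_ge (α / δ)
  rw [div_le_iff₀ hδ] at hk
  induction k generalizing α with
  | zero => rwa [show α = 0 by simp at hk; linarith] at hα
  | succ k ih =>
    refine ih (le_max_right _ _) (max_lt (by linarith) (by linarith)) (hstep α hα0 hαd hα) ?_
    push_cast at hk
    exact max_le (by linarith) (by positivity)

lemma exists_abs_rieszK_le (n : ℕ) (s : ℝ) :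
    ∃ γ, 0 ≤ γ ∧ ∀ x : Euc n, |rieszK n s x| ≤ γ * ‖x‖ ^ (-((n : ℝ) - 2 * s)) :=
  ⟨_, abs_nonneg _, fun x => by
    rw [rieszK, abs_mul, abs_of_nonneg (rpow_nonneg (norm_nonneg x) _), neg_sub]⟩

theorem stmt19_general (n N : ℕ) (s α β : ℝ) (hs : 0 < s) (hsn : 2*s < (n:ℝ))
    (hα : 0 < α) (hαn : α < (n:ℝ)) (hβ : 2*s < β)
    (Y : Fin N → Euc n)
    (f V : Euc n → ℝ) (C : ℝ) (hC : 0 < C)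
    (heq : ∀ y : Euc n, y ∉ Set.range Y →
      f y = ∫ ω : Euc n, rieszK n s (y - ω) * (V ω * f ω))
    (hf : ∀ y : Euc n, y ∉ Set.range Y →
      |f y| ≤ C * (1 + ∑ i, ‖y - Y i‖ ^ (-α)))
    (hV : ∀ y : Euc n, y ∉ Set.range Y → |V y| ≤ C * jb ‖y‖ ^ (-β)) :
    ∃ M : ℝ, ∀ y : Euc n, y ∉ Set.range Y → |f y| ≤ M := by
  have hd : (finrank ℝ (Euc n) : ℝ) = n := by rw [finrank_euclideanSpace_fin]
  obtain ⟨γ, hγ, hk⟩ := exists_abs_rieszK_le n s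
  have hstep (a : ℝ) (ha0 : 0 ≤ a) (han : a < n) (ha : BoundedBySingularWeight f Y a) :
      BoundedBySingularWeight f Y (max (a - s) 0) :=
    ha.max_sub_of_integral_eq (μ := volume) (p := n - 2 * s) (by linarith) hs.le (by linarith)
      (by linarith) hγ hk hC.le hV heq ha0 (by rwa [hd])
  obtain ⟨M, -, hM⟩ := holds_zero_of_max_sub_step hs hstep hα.le hαn ⟨C, hC.le, hf⟩
  exact ⟨M * (1 + N), fun y hy => by simpa [singularWeight] using hM y hy⟩

/-- Lemma A.2: removability of singularities for the nonlocal
integral equation. -/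
theorem stmt19 (n N : ℕ) (s α β : ℝ) (hs : 0 < s) (hsn : 2*s < (n:ℝ))
    (hα : 0 < α) (hαn : α < (n:ℝ)) (hβ : 2*s < β)
    (Y : Fin N → Euc n) (hY : Function.Injective Y)
    (f V : Euc n → ℝ) (C : ℝ) (hC : 0 < C)
    (heq : ∀ y : Euc n, y ∉ Set.range Y →
      f y = ∫ ω : Euc n, rieszK n s (y - ω) * (V ω * f ω))
    (hf : ∀ y : Euc n, y ∉ Set.range Y →
      |f y| ≤ C * (1 + ∑ i, ‖y - Y i‖ ^ (-α)))
    (hV : ∀ y : Euc n, y ∉ Set.range Y → |V y| ≤ C * jb ‖y‖ ^ (-β)) :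
    ∃ M : ℝ, ∀ y : Euc n, y ∉ Set.range Y → |f y| ≤ M :=
  stmt19_general n N s α β hs hsn hα hαn hβ Y f V C hC heq hf hV
end
end
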